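/- arXiv:2407.00303 — 5 statements merged into one kernel-verified Lean document; each statement's English description precedes it below -/
import Mathlib

section
/- In an edge-coloured multigraph G with more than 4 vertices, if there exist three perfect matchings that are monochromatic in three pairwise distinct colours, then G contains a perfect matching that is not monochromatic. -/
open scoped Classical

/-- An edge-coloured edge-weighted multigraph (no self-loops) on vertex set `V`.
Each edge `e` has two endpoints `fst e`, `snd e`, a colour on each of its two
half-edges (`cf e` at `fst e`, `cs e` at `snd e`) and a complex weight `w e`. -/
structure EMG (V : Type) [Fintype V] [DecidableEq V] where
  E : Type
  [fintypeE : Fintype E]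
  fst : E → V
  snd : E → V
  noLoop : ∀ e, fst e ≠ snd e
  cf : E → ℕ
  cs : E → ℕ
  w : E → ℂ

namespace EMG

attribute [instance] EMG.fintypeE

variable {V : Type} [Fintype V] [DecidableEq V] (G : EMG V)

/-- `e` is incident to vertex `x`. -/
def inc (e : G.E) (x : V) : Prop := G.fst e = x ∨ G.snd e = x

/-- `M` is a perfect matching of the induced subgraph on `S`: all edges of `M`
lie inside `S` and every vertex of `S` is covered exactly once. -/
def IsPMOn (S : Finset V) (M : Finset G.E) : Prop :=
  (∀ e ∈ M, G.fst e ∈ S ∧ G.snd e ∈ S) ∧ ∀ x ∈ S, ∃! e, e ∈ M ∧ G.inc e x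

/-- `M` is a perfect matching of `G`. -/
def IsPM (M : Finset G.E) : Prop := G.IsPMOn Finset.univ M

/-- `M` induces the vertex colouring `vc`: every edge of `M` survives the
filtering by `vc` (half-edge colours agree with the endpoint colours). -/
def Induces (M : Finset G.E) (vc : V → ℕ) : Prop :=
  ∀ e ∈ M, G.cf e = vc (G.fst e) ∧ G.cs e = vc (G.snd e)

/-- The weight of the vertex colouring `vc` on the induced subgraph on `S`:
the sum over perfect matchings of the filtered subgraph of the products of
edge weights. -/
noncomputable def wcolOn (S : Finset V) (vc : V → ℕ) : ℂ :=
  ∑ M ∈ Finset.univ.filter (fun M => G.IsPMOn S M ∧ G.Induces M vc),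
    ∏ e ∈ M, G.w e

/-- The weight of the vertex colouring `vc` in `G`. -/
noncomputable def wcol (vc : V → ℕ) : ℂ := G.wcolOn Finset.univ vc

/-- `vc` is feasible: the subgraph filtered by `vc` has a perfect matching. -/
def Feasible (vc : V → ℕ) : Prop := ∃ M, G.IsPM M ∧ G.Induces M vc

/-- `G` is a GHZ graph: all feasible monochromatic vertex colourings have
weight `1` and all non-monochromatic vertex colourings have weight `0`. -/
def IsGHZ : Prop :=
  (∀ i : ℕ, G.Feasible (fun _ => i) → G.wcol (fun _ => i) = 1) ∧
  (∀ vc : V → ℕ, (¬ ∃ i : ℕ, ∀ x, vc x = i) → G.wcol vc = 0)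

/-- `G` is a g-GHZ graph: all feasible monochromatic vertex colourings have
non-zero weight and all non-monochromatic vertex colourings have weight `0`. -/
def IsgGHZ : Prop :=
  (∀ i : ℕ, G.Feasible (fun _ => i) → G.wcol (fun _ => i) ≠ 0) ∧
  (∀ vc : V → ℕ, (¬ ∃ i : ℕ, ∀ x, vc x = i) → G.wcol vc = 0)

/-- The dimension: the number of feasible monochromatic vertex colourings. -/
noncomputable def dimension : ℕ := Set.ncard {i : ℕ | G.Feasible (fun _ => i)}

/-- The skeleton of `G`: its underlying simple graph. -/
def skeleton : SimpleGraph V where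
  Adj a b := a ≠ b ∧ ∃ e : G.E, (G.fst e = a ∧ G.snd e = b) ∨ (G.fst e = b ∧ G.snd e = a)
  symm := by
    constructor
    intro a b h
    refine ⟨h.1.symm, ?_⟩
    obtain ⟨e, he⟩ := h.2
    exact ⟨e, he.symm⟩
  loopless := by constructor; intro a h; exact h.1 rfl

/-- Replace the weight function of `G`. -/
def reweight (w' : G.E → ℂ) : EMG V := { G with w := w' }

/-- Delete the edges in `D` from `G`. -/
noncomputable def deleteEdges (D : Finset G.E) : EMG V where
  E := {e : G.E // e ∉ D}
  fst e := G.fst e.1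
  snd e := G.snd e.1
  noLoop e := G.noLoop e.1
  cf e := G.cf e.1
  cs e := G.cs e.1
  w e := G.w e.1

/-- `M` is a monochromatic perfect matching of colour `i` (as a set of coloured
edges: all half-edges of `M` carry colour `i`). -/
def MonoPM (M : Finset G.E) (i : ℕ) : Prop :=
  ∀ e ∈ M, G.cf e = i ∧ G.cs e = i

/-- Both endpoints of `e` lie in `S`. -/
def bothIn (S : Finset V) (e : G.E) : Prop := G.fst e ∈ S ∧ G.snd e ∈ S

/-- `e` joins a vertex of `S` to the vertex `x`. -/
def connectsTo (S : Finset V) (x : V) (e : G.E) : Prop :=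
  (G.fst e ∈ S ∧ G.snd e = x) ∨ (G.snd e ∈ S ∧ G.fst e = x)

end EMG

/-- The matching index of a simple graph `H`: the maximum dimension over all
GHZ edge-coloured edge-weighted multigraphs whose skeleton is `H`. -/
noncomputable def matchingIndex {V : Type} [Fintype V] [DecidableEq V]
    (H : SimpleGraph V) : ℕ :=
  sSup {d : ℕ | ∃ G : EMG V, G.skeleton = H ∧ G.IsGHZ ∧ G.dimension = d}

namespace EMG

section Infra

variable {V : Type} [Fintype V] [DecidableEq V] (G : EMG V)

/-- The unique edge of a perfect matching `M` incident to `x`. -/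
noncomputable def edgeAt {M : Finset G.E} (h : G.IsPM M) (x : V) : G.E :=
  (h.2 x (Finset.mem_univ x)).exists.choose

lemma edgeAt_spec {M : Finset G.E} (h : G.IsPM M) (x : V) :
    G.edgeAt h x ∈ M ∧ G.inc (G.edgeAt h x) x :=
  (h.2 x (Finset.mem_univ x)).exists.choose_spec

lemma edgeAt_unique {M : Finset G.E} (h : G.IsPM M) (x : V) {e : G.E}
    (he : e ∈ M) (hi : G.inc e x) : e = G.edgeAt h x :=
  (h.2 x (Finset.mem_univ x)).unique ⟨he, hi⟩ (G.edgeAt_spec h x)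

/-- The vertex matched with `x` by the perfect matching `M`. -/
noncomputable def partner {M : Finset G.E} (h : G.IsPM M) (x : V) : V :=
  if G.fst (G.edgeAt h x) = x then G.snd (G.edgeAt h x) else G.fst (G.edgeAt h x)

lemma partner_ne {M : Finset G.E} (h : G.IsPM M) (x : V) : G.partner h x ≠ x := by
  unfold partner
  split_ifs with hf
  · intro hs; exact G.noLoop (G.edgeAt h x) (hf.trans hs.symm)
  · intro hs
    rcases (G.edgeAt_spec h x).2 with h1 | h1
    · exact hf h1
    · exact G.noLoop (G.edgeAt h x) (hs.trans h1.symm)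

lemma inc_partner {M : Finset G.E} (h : G.IsPM M) (x : V) :
    G.inc (G.edgeAt h x) (G.partner h x) := by
  unfold partner
  split_ifs with hf
  · exact Or.inr rfl
  · exact Or.inl rfl

lemma edgeAt_partner {M : Finset G.E} (h : G.IsPM M) (x : V) :
    G.edgeAt h (G.partner h x) = G.edgeAt h x :=
  (G.edgeAt_unique h (G.partner h x) (G.edgeAt_spec h x).1 (G.inc_partner h x)).symm

lemma partner_invol {M : Finset G.E} (h : G.IsPM M) (x : V) :
    G.partner h (G.partner h x) = x := by
  have hE := G.edgeAt_partner h x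
  rw [partner, hE]
  rcases (G.edgeAt_spec h x).2 with h1 | h1
  · have hp : G.partner h x = G.snd (G.edgeAt h x) := by
      unfold partner; rw [if_pos h1]
    rw [if_neg (by rw [hp]; exact G.noLoop _), h1]
  · have hp : G.partner h x = G.fst (G.edgeAt h x) := by
      unfold partner
      split_ifs with hf
      · exact absurd (hf.trans h1.symm) (G.noLoop _)
      · rfl
    rw [if_pos hp.symm, h1]

/-- endpoints of `edgeAt h x` are `x` and `partner h x`. -/
lemma inc_edgeAt_iff {M : Finset G.E} (h : G.IsPM M) (x y : V)
    (hi : G.inc (G.edgeAt h x) y) : y = x ∨ y = G.partner h x := by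
  rcases (G.edgeAt_spec h x).2 with h1 | h1
  · rcases hi with h2 | h2
    · exact Or.inl (h1 ▸ h2.symm ▸ rfl)
    · right; rw [partner, if_pos h1, h2]
  · rcases hi with h2 | h2
    · right
      rw [partner]
      split_ifs with hf
      · exact absurd (hf.trans h1.symm) (G.noLoop _)
      · rw [h2]
    · exact Or.inl (h1 ▸ h2.symm ▸ rfl)

/-- Build a non-monochromatic perfect matching from a compatible selector. -/
lemma exists_nonmono_of_selector (Ms : Fin 3 → Finset G.E) (cols : Fin 3 → ℕ)
    (hpm : ∀ c, G.IsPM (Ms c)) (hmono : ∀ c, G.MonoPM (Ms c) (cols c))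
    (hii : Function.Injective cols) (j : V → Fin 3)
    (hcl : ∀ x, j (G.partner (hpm (j x)) x) = j x)
    (hjne : ∃ x y, j x ≠ j y) :
    ∃ M : Finset G.E, G.IsPM M ∧ ¬ ∃ i : ℕ, G.MonoPM M i := by
  classical
  refine ⟨Finset.univ.image (fun x => G.edgeAt (hpm (j x)) x), ?_, ?_⟩
  · constructor
    · intro e _; exact ⟨Finset.mem_univ _, Finset.mem_univ _⟩
    · intro x _
      refine ⟨G.edgeAt (hpm (j x)) x, ⟨Finset.mem_image_of_mem _ (Finset.mem_univ x),
        (G.edgeAt_spec (hpm (j x)) x).2⟩, ?_⟩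
      rintro e ⟨he, hi⟩
      obtain ⟨y, -, rfl⟩ := Finset.mem_image.1 he
      rcases G.inc_edgeAt_iff (hpm (j y)) y x hi with rfl | hx
      · rfl
      · have hjxy : j x = j y := by rw [hx, hcl y]
        subst hx
        rw [show (j (G.partner (hpm (j y)) y)) = j y from hcl y]
        exact (G.edgeAt_partner (hpm (j y)) y).symm
  · rintro ⟨i, hi⟩
    obtain ⟨x, y, hxy⟩ := hjne
    have hx : G.edgeAt (hpm (j x)) x ∈ Finset.univ.image (fun x => G.edgeAt (hpm (j x)) x) :=
      Finset.mem_image_of_mem _ (Finset.mem_univ x)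
    have hy : G.edgeAt (hpm (j y)) y ∈ Finset.univ.image (fun x => G.edgeAt (hpm (j x)) x) :=
      Finset.mem_image_of_mem _ (Finset.mem_univ y)
    have h1 : cols (j x) = i :=
      ((hmono (j x)) _ (G.edgeAt_spec (hpm (j x)) x).1).1.symm.trans (hi _ hx).1
    have h2 : cols (j y) = i :=
      ((hmono (j y)) _ (G.edgeAt_spec (hpm (j y)) y).1).1.symm.trans (hi _ hy).1
    exact hxy (hii (h1.trans h2.symm))

end Infra

end EMG

section SelectorCore

open Function

variable {V : Type} [Fintype V] [DecidableEq V]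

/-- In the dihedral action generated by two fixed-point-free involutions, an odd
word can never return to the `σ`-orbit of the base point. -/
lemma noMix (p1 p2 : V → V)
    (i1 : ∀ x, p1 (p1 x) = x) (i2 : ∀ x, p2 (p2 x) = x)
    (f1 : ∀ x, p1 x ≠ x) (f2 : ∀ x, p2 x ≠ x) (x₀ : V) (m : ℕ) (hm : 0 < m)
    (hchar : ∀ α β : ℕ,
      (fun y => p2 (p1 y))^[α] x₀ = (fun y => p2 (p1 y))^[β] x₀ ↔ α % m = β % m)
    (q q' : ℕ) : p1 ((fun y => p2 (p1 y))^[q] x₀) ≠ (fun y => p2 (p1 y))^[q'] x₀ := by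
  set σ : V → V := fun y => p2 (p1 y) with hσ
  set τ : V → V := fun y => p1 (p2 y) with hτ
  intro hE
  have hστ : ∀ y, σ (τ y) = y := fun y => by simp only [hσ, hτ, i1, i2]
  have hτσ : ∀ y, τ (σ y) = y := fun y => by simp only [hσ, hτ, i1, i2]
  have hp1σ : ∀ y, p1 (σ y) = τ (p1 y) := fun y => rfl
  have hp1it : ∀ t y, p1 (σ^[t] y) = τ^[t] (p1 y) := by
    intro t
    induction t with
    | zero => intro y; simp
    | succ t ih =>
      intro y
      rw [Function.iterate_succ_apply', Function.iterate_succ_apply', hp1σ, ih]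
  have htsit : ∀ t y, τ^[t] (σ^[t] y) = y := by
    intro t
    induction t with
    | zero => intro y; simp
    | succ t ih =>
      intro y
      rw [Function.iterate_succ_apply σ, Function.iterate_succ_apply' τ, ih, hτσ]
  have hstit : ∀ t y, σ^[t] (τ^[t] y) = y := by
    intro t
    induction t with
    | zero => intro y; simp
    | succ t ih =>
      intro y
      rw [Function.iterate_succ_apply τ, Function.iterate_succ_apply' σ, ih, hστ]
  -- key1 : images of even words avoid σ^[q'] x₀
  have key1 : ∀ t : ℕ, σ^[2*t + q] x₀ ≠ σ^[q'] x₀ := by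
    intro t hK
    apply f1 (σ^[t + q] x₀)
    have h2 : σ^[t] (σ^[t+q] x₀) = σ^[q'] x₀ := by
      rw [← Function.iterate_add_apply, show t + (t + q) = 2*t + q by ring]
      exact hK
    have h3 : σ^[t+q] x₀ = τ^[t] (σ^[q'] x₀) := by rw [← h2, htsit]
    calc p1 (σ^[t+q] x₀) = τ^[t] (p1 (σ^[q] x₀)) := by
          rw [Function.iterate_add_apply, hp1it]
      _ = τ^[t] (σ^[q'] x₀) := by rw [hE]
      _ = σ^[t+q] x₀ := h3.symm
  -- key2 : even words avoid σ^[q'+1] x₀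
  have key2 : ∀ t : ℕ, σ^[2*t + q] x₀ ≠ σ^[q'+1] x₀ := by
    intro t hK
    apply f2 (σ^[t + q] x₀)
    have h2 : σ^[t] (σ^[t+q] x₀) = σ^[q'+1] x₀ := by
      rw [← Function.iterate_add_apply, show t + (t + q) = 2*t + q by ring]
      exact hK
    have h3 : σ^[t+q] x₀ = τ^[t] (σ (σ^[q'] x₀)) := by
      rw [← Function.iterate_succ_apply' σ q', ← h2, htsit]
    have hcomm : ∀ y, τ^[t] (σ y) = σ (τ^[t] y) := by
      intro y
      conv_lhs => rw [← hstit t y]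
      rw [← Function.iterate_succ_apply' σ, Function.iterate_succ_apply σ, htsit]
    have hp2 : ∀ y, p2 y = σ (p1 y) := by
      intro y
      show p2 y = p2 (p1 (p1 y))
      rw [i1]
    calc p2 (σ^[t+q] x₀) = σ (p1 (σ^[t+q] x₀)) := hp2 _
      _ = σ (τ^[t] (p1 (σ^[q] x₀))) := by rw [Function.iterate_add_apply, hp1it]
      _ = σ (τ^[t] (σ^[q'] x₀)) := by rw [hE]
      _ = τ^[t] (σ (σ^[q'] x₀)) := (hcomm _).symm
      _ = σ^[t+q] x₀ := h3.symm
  -- now derive a contradiction by solving a parity equation mod m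
  set r := q % m with hr
  set r' := q' % m with hr'
  have hrq : r ≤ q := Nat.mod_le q m
  have hrm : r < m := Nat.mod_lt _ hm
  have hrm' : r' < m := Nat.mod_lt _ hm
  have hqr : Nat.ModEq m q r := (Nat.mod_mod_of_dvd q dvd_rfl).symm
  rcases Nat.even_or_odd (r' + m - r) with ⟨t, ht⟩ | ⟨t, ht⟩
  · apply key1 t
    rw [hchar]
    show Nat.ModEq m (2*t + q) q'
    calc (2*t + q : ℕ) ≡ 2*t + r [MOD m] := Nat.ModEq.add_left _ hqr
      _ = r' + m - r + r := by omega
      _ = r' + m := by omega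
      _ ≡ r' [MOD m] := Nat.add_mod_right r' m
      _ ≡ q' [MOD m] := Nat.mod_mod_of_dvd q' dvd_rfl
  · apply key2 (t + 1)
    rw [hchar]
    show Nat.ModEq m (2*(t+1) + q) (q' + 1)
    calc (2*(t+1) + q : ℕ) ≡ 2*(t+1) + r [MOD m] := Nat.ModEq.add_left _ hqr
      _ = (r' + 1) + m := by omega
      _ ≡ r' + 1 [MOD m] := Nat.add_mod_right (r'+1) m
      _ ≡ q' + 1 [MOD m] := Nat.ModEq.add_right 1 (Nat.mod_mod_of_dvd q' dvd_rfl)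

end SelectorCore

section Selector

open Function

set_option maxHeartbeats 16000000 in
/-- Three fixed-point-free involutions on a finite set with more than 4 elements
admit a compatible non-constant selector. -/
lemma exists_selector {V : Type} [Fintype V] [DecidableEq V] (p : Fin 3 → V → V)
    (hinv : ∀ c x, p c (p c x) = x)
    (hfpf : ∀ c x, p c x ≠ x)
    (hV : 4 < Fintype.card V) :
    ∃ j : V → Fin 3, (∀ x, j (p (j x) x) = j x) ∧ ∃ x y, j x ≠ j y := by
  classical
  obtain ⟨x₀⟩ : Nonempty V := Fintype.card_pos_iff.mp (by omega)
  set σ : V → V := fun y => p 1 (p 0 y) with hσdef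
  -- σ is a permutation, hence x₀ is a periodic point
  have hper : x₀ ∈ Function.periodicPts σ := by
    have hi0 : Function.Involutive (p 0) := hinv 0
    have hi1 : Function.Involutive (p 1) := hinv 1
    set eσ : Equiv.Perm V := (hi0.toPerm (p 0)).trans (hi1.toPerm (p 1)) with heσ
    have hco : ∀ k : ℕ, σ^[k] = ⇑(eσ ^ k) := by
      intro k
      have : σ = ⇑eσ := rfl
      rw [this, Equiv.Perm.iterate_eq_pow]
    refine ⟨orderOf eσ, orderOf_pos eσ, ?_⟩
    show σ^[orderOf eσ] x₀ = x₀
    rw [hco, pow_orderOf_eq_one]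
    rfl
  set m := Function.minimalPeriod σ x₀ with hmdef
  have hm : 0 < m := Function.minimalPeriod_pos_of_mem_periodicPts hper
  have hmfix : σ^[m] x₀ = x₀ := Function.isPeriodicPt_minimalPeriod σ x₀
  have hchar : ∀ α β : ℕ, σ^[α] x₀ = σ^[β] x₀ ↔ α % m = β % m := by
    intro α β
    constructor
    · intro h
      have hα : σ^[α % m] x₀ = σ^[α] x₀ := Function.iterate_mod_minimalPeriod_eq
      have hβ : σ^[β % m] x₀ = σ^[β] x₀ := Function.iterate_mod_minimalPeriod_eq
      exact Function.iterate_injOn_Iio_minimalPeriod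
        (Set.mem_Iio.2 (Nat.mod_lt α hm)) (Set.mem_Iio.2 (Nat.mod_lt β hm))
        (hα.trans (h.trans hβ.symm))
    · intro h
      have hα : σ^[α % m] x₀ = σ^[α] x₀ := Function.iterate_mod_minimalPeriod_eq
      have hβ : σ^[β % m] x₀ = σ^[β] x₀ := Function.iterate_mod_minimalPeriod_eq
      rw [← hα, ← hβ, h]
  -- the cyclic coordinate map
  set u : ℕ → V := fun k => if k % 2 = 0 then σ^[k/2] x₀ else p 0 (σ^[k/2] x₀) with hudef
  set n := 2 * m with hndef
  have hnpos : 0 < n := by omega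
  have law1 : ∀ q, p 0 (u (2*q)) = u (2*q+1) := by
    intro q
    have h1 : (2*q) % 2 = 0 := by omega
    have h2 : (2*q+1) % 2 = 1 := by omega
    have h3 : (2*q)/2 = q := by omega
    have h4 : (2*q+1)/2 = q := by omega
    simp only [hudef, h1, h2, h3, h4, if_true, if_false]
    simp
  have law2 : ∀ q, p 1 (u (2*q+1)) = u (2*q+2) := by
    intro q
    have h2 : (2*q+1) % 2 = 1 := by omega
    have h4 : (2*q+1)/2 = q := by omega
    have h5 : (2*q+2) % 2 = 0 := by omega
    have h6 : (2*q+2)/2 = q+1 := by omega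
    simp only [hudef, h2, h4, h5, h6]
    norm_num
    show σ (σ^[q] x₀) = σ^[q] (σ x₀)
    rw [← Function.iterate_succ_apply' σ q, Function.iterate_succ_apply]
  have uper : ∀ k, u (k + n) = u k := by
    intro k
    have h1 : (k + n) % 2 = k % 2 := by omega
    have h2 : (k + n) / 2 = k / 2 + m := by omega
    have h3 : σ^[k/2 + m] x₀ = σ^[k/2] x₀ := by
      rw [Function.iterate_add_apply, hmfix]
    simp only [hudef, h1, h2, h3]
  have uadd : ∀ (jj k : ℕ), u (k + n * jj) = u k := by
    intro jj
    induction jj with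
    | zero => intro k; simp
    | succ jj ih =>
      intro k
      have : k + n * (jj + 1) = (k + n * jj) + n := by ring
      rw [this, uper, ih]
  have umod : ∀ k, u (k % n) = u k := by
    intro k
    conv_rhs => rw [← Nat.div_add_mod k n]
    rw [Nat.add_comm (n * (k / n)) (k % n), uadd]
  -- the four moves along the cycle
  have stepA : ∀ k, k % 2 = 0 → p 0 (u k) = u (k+1) := by
    intro k hk
    obtain ⟨q, rfl⟩ : ∃ q, k = 2*q := ⟨k/2, by omega⟩
    exact law1 q
  have stepB : ∀ k, k % 2 = 1 → p 0 (u k) = u (k-1) := by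
    intro k hk
    obtain ⟨q, rfl⟩ : ∃ q, k = 2*q+1 := ⟨k/2, by omega⟩
    have : (2*q+1) - 1 = 2*q := by omega
    rw [this, ← law1 q, hinv]
  have stepC : ∀ k, k % 2 = 1 → p 1 (u k) = u (k+1) := by
    intro k hk
    obtain ⟨q, rfl⟩ : ∃ q, k = 2*q+1 := ⟨k/2, by omega⟩
    exact law2 q
  have stepD : ∀ k, k % 2 = 0 → p 1 (u k) = u (k + n - 1) := by
    intro k hk
    obtain ⟨q, hq⟩ : ∃ q, k + n = 2*q+2 := ⟨(k + n)/2 - 1, by omega⟩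
    rw [← uper k, hq]
    have h1 : 2*q+2 - 1 = 2*q+1 := by omega
    rw [h1, ← law2 q, hinv]
  -- the cycle through x₀
  set W : Finset V := (Finset.range n).image u with hWdef
  have Wmem : ∀ x, x ∈ W ↔ ∃ k, k < n ∧ u k = x := by
    intro x
    simp only [hWdef, Finset.mem_image, Finset.mem_range]
  have Wcl0 : ∀ x ∈ W, p 0 x ∈ W := by
    intro x hx
    obtain ⟨k, hk, rfl⟩ := (Wmem x).1 hx
    rcases Nat.mod_two_eq_zero_or_one k with hk2 | hk2
    · rw [stepA k hk2, ← umod]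
      exact (Wmem _).2 ⟨(k+1) % n, Nat.mod_lt _ hnpos, rfl⟩
    · rw [stepB k hk2]
      exact (Wmem _).2 ⟨k - 1, by omega, rfl⟩
  have Wcl1 : ∀ x ∈ W, p 1 x ∈ W := by
    intro x hx
    obtain ⟨k, hk, rfl⟩ := (Wmem x).1 hx
    rcases Nat.mod_two_eq_zero_or_one k with hk2 | hk2
    · rw [stepD k hk2, ← umod]
      exact (Wmem _).2 ⟨(k + n - 1) % n, Nat.mod_lt _ hnpos, rfl⟩
    · rw [stepC k hk2, ← umod]
      exact (Wmem _).2 ⟨(k+1) % n, Nat.mod_lt _ hnpos, rfl⟩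
  by_cases hWuniv : W = Finset.univ
  · -- transitive case
    have uval0 : ∀ q, u (2*q) = σ^[q] x₀ := by
      intro q
      have h1 : (2*q) % 2 = 0 := by omega
      have h3 : (2*q)/2 = q := by omega
      simp only [hudef]
      rw [if_pos h1, h3]
    have uval1 : ∀ q, u (2*q+1) = p 0 (σ^[q] x₀) := by
      intro q
      have h1 : (2*q+1) % 2 = 1 := by omega
      have h3 : (2*q+1)/2 = q := by omega
      simp only [hudef, h1, h3]
      simp
    have hmix : ∀ q q', p 0 (σ^[q] x₀) ≠ σ^[q'] x₀ :=
      noMix (p 0) (p 1) (hinv 0) (hinv 1) (hfpf 0) (hfpf 1) x₀ m hm hchar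
    have hσinj : ∀ q q', q < m → q' < m → σ^[q] x₀ = σ^[q'] x₀ → q = q' := by
      intro q q' hq hq' h
      have := (hchar q q').1 h
      rwa [Nat.mod_eq_of_lt hq, Nat.mod_eq_of_lt hq'] at this
    have uinj : ∀ k k', k < n → k' < n → u k = u k' → k = k' := by
      intro k k' hk hk' he
      rcases Nat.mod_two_eq_zero_or_one k with h2 | h2 <;>
        rcases Nat.mod_two_eq_zero_or_one k' with h2' | h2'
      · obtain ⟨q, rfl⟩ : ∃ q, k = 2*q := ⟨k/2, by omega⟩
        obtain ⟨q', rfl⟩ : ∃ q', k' = 2*q' := ⟨k'/2, by omega⟩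
        rw [uval0, uval0] at he
        have := hσinj q q' (by omega) (by omega) he
        omega
      · obtain ⟨q, rfl⟩ : ∃ q, k = 2*q := ⟨k/2, by omega⟩
        obtain ⟨q', rfl⟩ : ∃ q', k' = 2*q'+1 := ⟨k'/2, by omega⟩
        rw [uval0, uval1] at he
        exact absurd he.symm (hmix q' q)
      · obtain ⟨q, rfl⟩ : ∃ q, k = 2*q+1 := ⟨k/2, by omega⟩
        obtain ⟨q', rfl⟩ : ∃ q', k' = 2*q' := ⟨k'/2, by omega⟩
        rw [uval1, uval0] at he
        exact absurd he (hmix q q')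
      · obtain ⟨q, rfl⟩ : ∃ q, k = 2*q+1 := ⟨k/2, by omega⟩
        obtain ⟨q', rfl⟩ : ∃ q', k' = 2*q'+1 := ⟨k'/2, by omega⟩
        rw [uval1, uval1] at he
        have he2 := congrArg (p 0) he
        rw [hinv, hinv] at he2
        have := hσinj q q' (by omega) (by omega) he2
        omega
    have hcardV : Fintype.card V = n := by
      have h1 : W.card = n := by
        rw [hWdef, Finset.card_image_of_injOn, Finset.card_range]
        intro x hx y hy hxy
        exact uinj x y (Finset.mem_range.1 hx) (Finset.mem_range.1 hy) hxy
      rw [← h1, hWuniv, Finset.card_univ]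
    have hn6 : 6 ≤ n := by
      rw [hcardV] at hV
      omega
    have usurj : ∀ x : V, ∃ k, k < n ∧ u k = x := by
      intro x
      exact (Wmem x).1 (hWuniv ▸ Finset.mem_univ x)
    set pos : V → ℕ := fun x => (usurj x).choose with hposdef
    have hpos1 : ∀ x, pos x < n := fun x => (usurj x).choose_spec.1
    have hpos2 : ∀ x, u (pos x) = x := fun x => (usurj x).choose_spec.2
    have posu : ∀ k, k < n → pos (u k) = k := fun k hk => uinj _ _ (hpos1 _) hk (hpos2 _)
    set P : ℕ → ℕ := fun k => pos (p 2 (u k)) with hPdef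
    have hP1 : ∀ k, P k < n := fun k => hpos1 _
    have hP2 : ∀ k, u (P k) = p 2 (u k) := fun k => hpos2 _
    have hPP : ∀ k, k < n → P (P k) = k := by
      intro k hk
      apply uinj _ _ (hP1 _) hk
      rw [hP2, hP2, hinv]
    have hPne : ∀ k, k < n → P k ≠ k := by
      intro k hk h
      exact hfpf 2 (u k) (by rw [← hP2, h])
    -- arithmetic helpers
    have modsmall : ∀ x : ℕ, x < 2*n → x % n = if x < n then x else x - n := by
      intro x hx
      split_ifs with h
      · exact Nat.mod_eq_of_lt h
      · rw [Nat.mod_eq_sub_mod (le_of_not_gt h), Nat.mod_eq_of_lt (by omega)]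
    have modpar : ∀ x : ℕ, x % n % 2 = x % 2 := by
      intro x
      have h := Nat.div_add_mod x n
      obtain ⟨c, hc⟩ : ∃ c, n * (x/n) = 2*c := ⟨m*(x/n), by rw [hndef]; ring⟩
      omega
    have key_ofs : ∀ a k, a < n → k < n → (a + (k + (n - a)) % n) % n = k := by
      intro a k ha hk
      rw [modsmall (k + (n-a)) (by omega)]
      split_ifs with h
      · rw [modsmall _ (by omega)]
        split_ifs with h2 <;> omega
      · rw [modsmall _ (by omega)]
        split_ifs with h2 <;> omega
    have uofs : ∀ a t, a < n → t < n → ((a + t) % n + (n - a)) % n = t := by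
      intro a t ha ht
      rw [Nat.mod_add_mod, modsmall _ (by omega)]
      split_ifs with h <;> omega
    have off_succ : ∀ a k : ℕ, ((k+1) % n + (n - a)) % n = ((k + (n - a)) % n + 1) % n := by
      intro a k
      rw [Nat.mod_add_mod, Nat.mod_add_mod]
      congr 1
      omega
    have off_pred : ∀ a k : ℕ, 1 ≤ k → ((k-1) + (n-a)) % n = ((k + (n-a)) % n + (n-1)) % n := by
      intro a k hk
      rw [Nat.mod_add_mod]
      rw [← Nat.add_mod_right (k-1+(n-a)) n]
      congr 1
      omega
    have off_predD : ∀ a k : ℕ, ((k + n - 1) % n + (n - a)) % n = ((k + (n-a)) % n + (n-1)) % n := by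
      intro a k
      rw [Nat.mod_add_mod, Nat.mod_add_mod]
      congr 1
      omega
    -- moves expressed via positions
    have mv0f : ∀ x, pos x % 2 = 0 → p 0 x = u ((pos x + 1) % n) := by
      intro x hx
      rw [umod]
      conv_lhs => rw [← hpos2 x]
      exact stepA _ hx
    have mv0b : ∀ x, pos x % 2 = 1 → p 0 x = u (pos x - 1) := by
      intro x hx
      conv_lhs => rw [← hpos2 x]
      exact stepB _ hx
    have mv1f : ∀ x, pos x % 2 = 1 → p 1 x = u ((pos x + 1) % n) := by
      intro x hx
      rw [umod]
      conv_lhs => rw [← hpos2 x]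
      exact stepC _ hx
    have mv1b : ∀ x, pos x % 2 = 0 → p 1 x = u ((pos x + n - 1) % n) := by
      intro x hx
      rw [umod]
      conv_lhs => rw [← hpos2 x]
      exact stepD _ hx
    by_cases hparB : ∀ k, k < n → P k % 2 = k % 2
    · -- Case B : all chords preserve parity; take a chord of minimal length
      obtain ⟨a, haR, hamin⟩ := Finset.exists_min_image (Finset.range n)
        (fun k => (P k + (n - k)) % n) ⟨0, Finset.mem_range.2 hnpos⟩
      have ha : a < n := Finset.mem_range.1 haR
      set b := P a with hbdef
      have hb : b < n := hP1 a
      set L := (b + (n - a)) % n with hLdef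
      have hL1 : L < n := Nat.mod_lt _ hnpos
      have haL : (a + L) % n = b := key_ofs a b ha hb
      have hL0 : L ≠ 0 := by
        intro h
        apply hPne a ha
        have h2 := haL
        rw [h, Nat.add_zero, Nat.mod_eq_of_lt ha] at h2
        have h3 := h2.symm
        rw [hbdef] at h3
        exact h3
      have hLpar : L % 2 = 0 := by
        have h1 : L % 2 = (b + (n - a)) % 2 := modpar _
        have h2 : P a % 2 = a % 2 := hparB a ha
        omega
      have hL2 : 2 ≤ L := by omega
      set c := (a + 1) % n with hcdef
      have hc : c < n := Nat.mod_lt _ hnpos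
      have hofc : (c + (n - a)) % n = 1 := uofs a 1 ha (by omega)
      set d := P c with hddef
      have hd : d < n := hP1 c
      set s := (d + (n - a)) % n with hsdef
      have hs1 : s < n := Nat.mod_lt _ hnpos
      have has : (a + s) % n = d := key_ofs a d ha hd
      have hdc : d ≠ c := by
        intro h
        apply hPne c hc
        have h2 := hddef.symm
        rw [h] at h2
        exact h2
      have hcb : c ≠ b := by
        intro h
        have h2 := hofc
        rw [h, ← hLdef] at h2
        omega
      have hda : d ≠ a := by
        intro h
        apply hcb
        have h2 := hPP c hc
        rw [← hddef, h] at h2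
        exact (hbdef.trans h2).symm
      have hs0 : s ≠ 0 := by
        intro h
        apply hda
        have h2 := has
        rw [h, Nat.add_zero, Nat.mod_eq_of_lt ha] at h2
        exact h2.symm
      have hsc : s ≠ 1 := by
        intro h
        apply hdc
        have h2 := has
        rw [h, ← hcdef] at h2
        exact h2.symm
      have hspar : s % 2 = 1 := by
        have h1 : s % 2 = (d + (n - a)) % 2 := modpar _
        have h2 : P c % 2 = c % 2 := hparB c hc
        have h3 : c % 2 = (a+1) % 2 := by rw [hcdef]; exact modpar _
        omega
      have hellc : (P c + (n - c)) % n = s - 1 := by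
        rw [← hddef]
        by_cases han : a + 1 < n
        · have hc' : c = a + 1 := by rw [hcdef, Nat.mod_eq_of_lt han]
          rw [hc']
          have he : d + (n - (a+1)) = (d + (n - a)) - 1 := by omega
          rw [he, ← Nat.add_mod_right ((d + (n-a)) - 1) n]
          have he2 : (d + (n-a)) - 1 + n = (d + (n - a)) + (n - 1) := by omega
          rw [he2, ← Nat.mod_add_mod, ← hsdef, modsmall _ (by omega)]
          split_ifs with h2 <;> omega
        · have han' : a + 1 = n := by omega
          have hc' : c = 0 := by rw [hcdef, han', Nat.mod_self]
          rw [hc', Nat.sub_zero, Nat.add_mod_right, Nat.mod_eq_of_lt hd]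
          have hna : n - a = 1 := by omega
          have hs' : s = (d + 1) % n := by rw [hsdef, hna]
          rw [modsmall (d+1) (by omega)] at hs'
          split_ifs at hs' with h2 <;> omega
      have hsL : L + 1 ≤ s := by
        have hLa : (P a + (n - a)) % n = L := by rw [hLdef, hbdef]
        have hmin := hamin c (Finset.mem_range.2 hc)
        simp only [hbdef, hLa, hellc] at hmin
        omega
      set F : ℕ → Fin 3 := fun t => if t = 0 then 2 else if t = 1 then 2 else if t = L then 2
        else if t = s then 2
        else if t < L then (if a % 2 = 0 then 0 else 1)
        else if t < s then (if a % 2 = 0 then 1 else 0)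
        else (if a % 2 = 0 then 0 else 1) with hFdef
      set j : V → Fin 3 := fun z => F ((pos z + (n - a)) % n) with hjdef
      have hjval : ∀ z, j z = F ((pos z + (n - a)) % n) := fun z => rfl
      refine ⟨j, ?_, ?_⟩
      · intro x
        rw [hjval x]
        set t := (pos x + (n - a)) % n with htdef
        have ht : t < n := Nat.mod_lt _ hnpos
        have hkt : (a + t) % n = pos x := key_ofs a (pos x) ha (hpos1 x)
        have hkpar : pos x % 2 = (a + t) % 2 := by
          conv_lhs => rw [← hkt]
          exact modpar _
        have hpx : pos x < n := hpos1 x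
        by_cases hch : t = 0 ∨ t = 1 ∨ t = L ∨ t = s
        · have hFt : F t = 2 := by
            simp only [hFdef]
            rcases hch with hc1 | hc1 | hc1 | hc1
            · rw [if_pos hc1]
            · rw [if_neg (by omega), if_pos hc1]
            · rw [if_neg (by omega), if_neg (by omega), if_pos hc1]
            · rw [if_neg (by omega), if_neg (by omega), if_neg (by omega), if_pos hc1]
          rw [hFt, hjval]
          rcases hch with hc1 | hc1 | hc1 | hc1
          · have hxa : pos x = a := by rw [← hkt, hc1, Nat.add_zero, Nat.mod_eq_of_lt ha]
            have hxu : x = u a := by rw [← hxa, hpos2]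
            have hp2x : p 2 x = u b := by rw [hxu, ← hP2 a]
            rw [hp2x, posu b hb, ← hLdef]
            simp only [hFdef]
            split_ifs <;> first | rfl | omega | contradiction
          · have hxc : pos x = c := by
              rw [← hkt, hc1]
            have hxu : x = u c := by rw [← hxc, hpos2]
            have hp2x : p 2 x = u d := by rw [hxu, ← hP2 c, ← hddef]
            rw [hp2x, posu d hd, ← hsdef]
            simp only [hFdef]
            split_ifs <;> first | rfl | omega | contradiction
          · have hxb : pos x = b := by rw [← hkt, hc1, haL]
            have hxu : x = u b := by rw [← hxb, hpos2]
            have hPb : P b = a := hPP a ha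
            have hp2x : p 2 x = u a := by rw [hxu, ← hP2 b, hPb]
            rw [hp2x, posu a ha]
            rw [show (a + (n - a)) % n = 0 by rw [show a + (n-a) = n by omega, Nat.mod_self]]
            simp only [hFdef]
            split_ifs <;> first | rfl | omega | contradiction
          · have hxd : pos x = d := by rw [← hkt, hc1, has]
            have hxu : x = u d := by rw [← hxd, hpos2]
            have hPd : P d = c := by
              have h2 := hPP c hc
              rw [← hddef] at h2
              exact h2
            have hp2x : p 2 x = u c := by rw [hxu, ← hP2 d, hPd]
            rw [hp2x, posu c hc, hofc]
            simp only [hFdef]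
            split_ifs <;> first | rfl | omega | contradiction
        · push_neg at hch
          obtain ⟨hch0, hch1, hchL, hchs⟩ := hch
          by_cases harc : t < L
          · have hFt : F t = if a % 2 = 0 then 0 else 1 := by
              simp only [hFdef]
              rw [if_neg (by omega), if_neg (by omega), if_neg (by omega), if_neg (by omega),
                if_pos harc]
            rw [hFt]
            rcases Nat.mod_two_eq_zero_or_one a with ha2 | ha2
            · rw [if_pos ha2]
              rcases Nat.mod_two_eq_zero_or_one t with ht2 | ht2
              · have hk2 : pos x % 2 = 0 := by omega
                have hofs : (pos (p 0 x) + (n - a)) % n = t + 1 := by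
                  rw [mv0f x hk2, posu _ (Nat.mod_lt _ hnpos), off_succ a (pos x), ← htdef]
                  exact Nat.mod_eq_of_lt (by omega)
                rw [hjval, hofs]
                simp only [hFdef]
                split_ifs <;> first | rfl | omega | contradiction
              · have hk2 : pos x % 2 = 1 := by omega
                have hofs : (pos (p 0 x) + (n - a)) % n = t - 1 := by
                  rw [mv0b x hk2, posu _ (by omega), off_pred a (pos x) (by omega), ← htdef,
                    modsmall (t + (n-1)) (by omega)]
                  split_ifs with h2 <;> omega
                rw [hjval, hofs]
                simp only [hFdef]
                split_ifs <;> first | rfl | omega | contradiction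
            · rw [if_neg (by omega)]
              rcases Nat.mod_two_eq_zero_or_one t with ht2 | ht2
              · have hk2 : pos x % 2 = 1 := by omega
                have hofs : (pos (p 1 x) + (n - a)) % n = t + 1 := by
                  rw [mv1f x hk2, posu _ (Nat.mod_lt _ hnpos), off_succ a (pos x), ← htdef]
                  exact Nat.mod_eq_of_lt (by omega)
                rw [hjval, hofs]
                simp only [hFdef]
                split_ifs <;> first | rfl | omega | contradiction
              · have hk2 : pos x % 2 = 0 := by omega
                have hofs : (pos (p 1 x) + (n - a)) % n = t - 1 := by
                  rw [mv1b x hk2, posu _ (Nat.mod_lt _ hnpos), off_predD a (pos x), ← htdef,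
                    modsmall (t + (n-1)) (by omega)]
                  split_ifs with h2 <;> omega
                rw [hjval, hofs]
                simp only [hFdef]
                split_ifs <;> first | rfl | omega | contradiction
          · by_cases harc2 : t < s
            · have hFt : F t = if a % 2 = 0 then 1 else 0 := by
                simp only [hFdef]
                rw [if_neg (by omega), if_neg (by omega), if_neg (by omega), if_neg (by omega),
                  if_neg (by omega), if_pos harc2]
              rw [hFt]
              rcases Nat.mod_two_eq_zero_or_one a with ha2 | ha2
              · rw [if_pos ha2]
                rcases Nat.mod_two_eq_zero_or_one t with ht2 | ht2
                · have hk2 : pos x % 2 = 0 := by omega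
                  have hofs : (pos (p 1 x) + (n - a)) % n = t - 1 := by
                    rw [mv1b x hk2, posu _ (Nat.mod_lt _ hnpos), off_predD a (pos x), ← htdef,
                      modsmall (t + (n-1)) (by omega)]
                    split_ifs with h2 <;> omega
                  rw [hjval, hofs]
                  simp only [hFdef]
                  split_ifs <;> first | rfl | omega | contradiction
                · have hk2 : pos x % 2 = 1 := by omega
                  have hofs : (pos (p 1 x) + (n - a)) % n = t + 1 := by
                    rw [mv1f x hk2, posu _ (Nat.mod_lt _ hnpos), off_succ a (pos x), ← htdef]
                    exact Nat.mod_eq_of_lt (by omega)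
                  rw [hjval, hofs]
                  simp only [hFdef]
                  split_ifs <;> first | rfl | omega | contradiction
              · rw [if_neg (by omega)]
                rcases Nat.mod_two_eq_zero_or_one t with ht2 | ht2
                · have hk2 : pos x % 2 = 1 := by omega
                  have hofs : (pos (p 0 x) + (n - a)) % n = t - 1 := by
                    rw [mv0b x hk2, posu _ (by omega), off_pred a (pos x) (by omega), ← htdef,
                      modsmall (t + (n-1)) (by omega)]
                    split_ifs with h2 <;> omega
                  rw [hjval, hofs]
                  simp only [hFdef]
                  split_ifs <;> first | rfl | omega | contradiction
                · have hk2 : pos x % 2 = 0 := by omega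
                  have hofs : (pos (p 0 x) + (n - a)) % n = t + 1 := by
                    rw [mv0f x hk2, posu _ (Nat.mod_lt _ hnpos), off_succ a (pos x), ← htdef]
                    exact Nat.mod_eq_of_lt (by omega)
                  rw [hjval, hofs]
                  simp only [hFdef]
                  split_ifs <;> first | rfl | omega | contradiction
            · have hFt : F t = if a % 2 = 0 then 0 else 1 := by
                simp only [hFdef]
                rw [if_neg (by omega), if_neg (by omega), if_neg (by omega), if_neg (by omega),
                  if_neg (by omega), if_neg harc2]
              rw [hFt]
              rcases Nat.mod_two_eq_zero_or_one a with ha2 | ha2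
              · rw [if_pos ha2]
                rcases Nat.mod_two_eq_zero_or_one t with ht2 | ht2
                · have hk2 : pos x % 2 = 0 := by omega
                  have hofs : (pos (p 0 x) + (n - a)) % n = t + 1 := by
                    rw [mv0f x hk2, posu _ (Nat.mod_lt _ hnpos), off_succ a (pos x), ← htdef]
                    exact Nat.mod_eq_of_lt (by omega)
                  rw [hjval, hofs]
                  simp only [hFdef]
                  split_ifs <;> first | rfl | omega | contradiction
                · have hk2 : pos x % 2 = 1 := by omega
                  have hofs : (pos (p 0 x) + (n - a)) % n = t - 1 := by
                    rw [mv0b x hk2, posu _ (by omega), off_pred a (pos x) (by omega), ← htdef,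
                      modsmall (t + (n-1)) (by omega)]
                    split_ifs with h2 <;> omega
                  rw [hjval, hofs]
                  simp only [hFdef]
                  split_ifs <;> first | rfl | omega | contradiction
              · rw [if_neg (by omega)]
                rcases Nat.mod_two_eq_zero_or_one t with ht2 | ht2
                · have hk2 : pos x % 2 = 1 := by omega
                  have hofs : (pos (p 1 x) + (n - a)) % n = t + 1 := by
                    rw [mv1f x hk2, posu _ (Nat.mod_lt _ hnpos), off_succ a (pos x), ← htdef]
                    exact Nat.mod_eq_of_lt (by omega)
                  rw [hjval, hofs]
                  simp only [hFdef]
                  split_ifs <;> first | rfl | omega | contradiction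
                · have hk2 : pos x % 2 = 0 := by omega
                  have hofs : (pos (p 1 x) + (n - a)) % n = t - 1 := by
                    rw [mv1b x hk2, posu _ (Nat.mod_lt _ hnpos), off_predD a (pos x), ← htdef,
                      modsmall (t + (n-1)) (by omega)]
                    split_ifs with h2 <;> omega
                  rw [hjval, hofs]
                  simp only [hFdef]
                  split_ifs <;> first | rfl | omega | contradiction
      · by_cases hLbig : 3 ≤ L
        · refine ⟨u a, u ((a + 2) % n), ?_⟩
          rw [hjval, hjval, posu a ha, posu _ (Nat.mod_lt _ hnpos)]
          rw [show (a + (n - a)) % n = 0 by rw [show a + (n-a) = n by omega, Nat.mod_self]]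
          rw [uofs a 2 ha (by omega)]
          simp only [hFdef]
          split_ifs <;> first | rfl | decide | omega | contradiction
        · by_cases hs3 : s = 3
          · refine ⟨u a, u ((a + 4) % n), ?_⟩
            rw [hjval, hjval, posu a ha, posu _ (Nat.mod_lt _ hnpos)]
            rw [show (a + (n - a)) % n = 0 by rw [show a + (n-a) = n by omega, Nat.mod_self]]
            rw [uofs a 4 ha (by omega)]
            simp only [hFdef]
            split_ifs <;> first | rfl | decide | omega | contradiction
          · refine ⟨u a, u ((a + 3) % n), ?_⟩
            rw [hjval, hjval, posu a ha, posu _ (Nat.mod_lt _ hnpos)]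
            rw [show (a + (n - a)) % n = 0 by rw [show a + (n-a) = n by omega, Nat.mod_self]]
            rw [uofs a 3 ha (by omega)]
            simp only [hFdef]
            split_ifs <;> first | rfl | decide | omega | contradiction

    · -- Case A : some chord joins the two parity classes
      push_neg at hparB
      obtain ⟨a, ha, hab⟩ := hparB
      set b := P a with hbdef
      have hb : b < n := hP1 a
      set L := (b + (n - a)) % n with hLdef
      have hL1 : L < n := Nat.mod_lt _ hnpos
      have haL : (a + L) % n = b := key_ofs a b ha hb
      have hL0 : L ≠ 0 := by
        intro h
        apply hPne a ha
        have h2 := haL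
        rw [h, Nat.add_zero, Nat.mod_eq_of_lt ha] at h2
        have h3 := h2.symm
        rw [hbdef] at h3
        exact h3
      have hLpar : L % 2 = 1 := by
        have h1 : L % 2 = (b + (n - a)) % 2 := modpar _
        omega
      set F : ℕ → Fin 3 := fun t => if t = 0 then 2 else if t = L then 2
        else if t < L then (if a % 2 = 0 then 1 else 0)
        else (if a % 2 = 0 then 0 else 1) with hFdef
      set j : V → Fin 3 := fun z => F ((pos z + (n - a)) % n) with hjdef
      have hjval : ∀ z, j z = F ((pos z + (n - a)) % n) := fun z => rfl
      refine ⟨j, ?_, ?_⟩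
      · intro x
        rw [hjval x]
        set t := (pos x + (n - a)) % n with htdef
        have ht : t < n := Nat.mod_lt _ hnpos
        have hkt : (a + t) % n = pos x := key_ofs a (pos x) ha (hpos1 x)
        have hkpar : pos x % 2 = (a + t) % 2 := by
          conv_lhs => rw [← hkt]
          exact modpar _
        have hpx : pos x < n := hpos1 x
        by_cases hch : t = 0 ∨ t = L
        · have hFt : F t = 2 := by
            simp only [hFdef]
            rcases hch with hc | hc
            · rw [if_pos hc]
            · rw [if_neg (by omega), if_pos hc]
          rw [hFt, hjval]
          rcases hch with hc | hc
          · have hxa : pos x = a := by rw [← hkt, hc, Nat.add_zero, Nat.mod_eq_of_lt ha]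
            have hxu : x = u a := by rw [← hxa, hpos2]
            have hp2x : p 2 x = u b := by rw [hxu, ← hP2 a]
            rw [hp2x, posu b hb, ← hLdef]
            simp only [hFdef]
            split_ifs <;> first | rfl | omega | contradiction
          · have hxb : pos x = b := by rw [← hkt, hc, haL]
            have hxu : x = u b := by rw [← hxb, hpos2]
            have hPb : P b = a := hPP a ha
            have hp2x : p 2 x = u a := by rw [hxu, ← hP2 b, hPb]
            rw [hp2x, posu a ha]
            rw [show (a + (n - a)) % n = 0 by rw [show a + (n-a) = n by omega, Nat.mod_self]]
            simp only [hFdef]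
            split_ifs <;> first | rfl | omega | contradiction
        · push_neg at hch
          obtain ⟨hc0, hcL⟩ := hch
          by_cases harc : t < L
          · have hFt : F t = if a % 2 = 0 then 1 else 0 := by
              simp only [hFdef]
              rw [if_neg (by omega), if_neg (by omega), if_pos harc]
            rw [hFt]
            rcases Nat.mod_two_eq_zero_or_one a with ha2 | ha2
            · rw [if_pos ha2]
              rcases Nat.mod_two_eq_zero_or_one t with ht2 | ht2
              · have hk2 : pos x % 2 = 0 := by omega
                have hofs : (pos (p 1 x) + (n - a)) % n = t - 1 := by
                  rw [mv1b x hk2, posu _ (Nat.mod_lt _ hnpos), off_predD a (pos x), ← htdef,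
                    modsmall (t + (n-1)) (by omega)]
                  split_ifs with h <;> omega
                rw [hjval, hofs]
                simp only [hFdef]
                split_ifs <;> first | rfl | omega | contradiction
              · have hk2 : pos x % 2 = 1 := by omega
                have hofs : (pos (p 1 x) + (n - a)) % n = t + 1 := by
                  rw [mv1f x hk2, posu _ (Nat.mod_lt _ hnpos), off_succ a (pos x), ← htdef]
                  exact Nat.mod_eq_of_lt (by omega)
                rw [hjval, hofs]
                simp only [hFdef]
                split_ifs <;> first | rfl | omega | contradiction
            · rw [if_neg (by omega)]
              rcases Nat.mod_two_eq_zero_or_one t with ht2 | ht2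
              · have hk2 : pos x % 2 = 1 := by omega
                have hofs : (pos (p 0 x) + (n - a)) % n = t - 1 := by
                  rw [mv0b x hk2, posu _ (by omega), off_pred a (pos x) (by omega), ← htdef,
                    modsmall (t + (n-1)) (by omega)]
                  split_ifs with h <;> omega
                rw [hjval, hofs]
                simp only [hFdef]
                split_ifs <;> first | rfl | omega | contradiction
              · have hk2 : pos x % 2 = 0 := by omega
                have hofs : (pos (p 0 x) + (n - a)) % n = t + 1 := by
                  rw [mv0f x hk2, posu _ (Nat.mod_lt _ hnpos), off_succ a (pos x), ← htdef]
                  exact Nat.mod_eq_of_lt (by omega)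
                rw [hjval, hofs]
                simp only [hFdef]
                split_ifs <;> first | rfl | omega | contradiction
          · have hFt : F t = if a % 2 = 0 then 0 else 1 := by
              simp only [hFdef]
              rw [if_neg (by omega), if_neg (by omega), if_neg harc]
            rw [hFt]
            rcases Nat.mod_two_eq_zero_or_one a with ha2 | ha2
            · rw [if_pos ha2]
              rcases Nat.mod_two_eq_zero_or_one t with ht2 | ht2
              · have hk2 : pos x % 2 = 0 := by omega
                have hofs : (pos (p 0 x) + (n - a)) % n = t + 1 := by
                  rw [mv0f x hk2, posu _ (Nat.mod_lt _ hnpos), off_succ a (pos x), ← htdef]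
                  exact Nat.mod_eq_of_lt (by omega)
                rw [hjval, hofs]
                simp only [hFdef]
                split_ifs <;> first | rfl | omega | contradiction
              · have hk2 : pos x % 2 = 1 := by omega
                have hofs : (pos (p 0 x) + (n - a)) % n = t - 1 := by
                  rw [mv0b x hk2, posu _ (by omega), off_pred a (pos x) (by omega), ← htdef,
                    modsmall (t + (n-1)) (by omega)]
                  split_ifs with h <;> omega
                rw [hjval, hofs]
                simp only [hFdef]
                split_ifs <;> first | rfl | omega | contradiction
            · rw [if_neg (by omega)]
              rcases Nat.mod_two_eq_zero_or_one t with ht2 | ht2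
              · have hk2 : pos x % 2 = 1 := by omega
                have hofs : (pos (p 1 x) + (n - a)) % n = t + 1 := by
                  rw [mv1f x hk2, posu _ (Nat.mod_lt _ hnpos), off_succ a (pos x), ← htdef]
                  exact Nat.mod_eq_of_lt (by omega)
                rw [hjval, hofs]
                simp only [hFdef]
                split_ifs <;> first | rfl | omega | contradiction
              · have hk2 : pos x % 2 = 0 := by omega
                have hofs : (pos (p 1 x) + (n - a)) % n = t - 1 := by
                  rw [mv1b x hk2, posu _ (Nat.mod_lt _ hnpos), off_predD a (pos x), ← htdef,
                    modsmall (t + (n-1)) (by omega)]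
                  split_ifs with h <;> omega
                rw [hjval, hofs]
                simp only [hFdef]
                split_ifs <;> first | rfl | omega | contradiction
      · by_cases hLone : L = 1
        · refine ⟨u a, u ((a + 2) % n), ?_⟩
          rw [hjval, hjval, posu a ha, posu _ (Nat.mod_lt _ hnpos)]
          rw [show (a + (n - a)) % n = 0 by rw [show a + (n-a) = n by omega, Nat.mod_self]]
          rw [uofs a 2 ha (by omega)]
          simp only [hFdef]
          split_ifs <;> first | rfl | decide | omega | contradiction
        · refine ⟨u a, u ((a + 1) % n), ?_⟩
          rw [hjval, hjval, posu a ha, posu _ (Nat.mod_lt _ hnpos)]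
          rw [show (a + (n - a)) % n = 0 by rw [show a + (n-a) = n by omega, Nat.mod_self]]
          rw [uofs a 1 ha (by omega)]
          simp only [hFdef]
          split_ifs <;> first | rfl | decide | omega | contradiction

  · -- non-transitive case : use the cycle of x₀ and its complement
    have hy : ∃ y, y ∉ W := by
      by_contra h
      push_neg at h
      exact hWuniv (Finset.eq_univ_iff_forall.2 h)
    obtain ⟨y, hy⟩ := hy
    have hx₀W : x₀ ∈ W := (Wmem x₀).2 ⟨0, hnpos, by simp [hudef]⟩
    refine ⟨fun z => if z ∈ W then 0 else 1, ?_, ⟨x₀, y, ?_⟩⟩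
    · intro x
      by_cases hx : x ∈ W
      · simp only [if_pos hx]
        rw [if_pos (Wcl0 x hx)]
      · simp only [if_neg hx]
        have : p 1 x ∉ W := by
          intro hmem
          exact hx (by rw [← hinv 1 x]; exact Wcl1 _ hmem)
        rw [if_neg this]
    · simp only [if_pos hx₀W, if_neg hy]
      decide

end Selector

/-- **Bogdanov's theorem.** In an edge-coloured multigraph with more than 4
vertices, three perfect matchings that are monochromatic in three pairwise
distinct colours force a non-monochromatic perfect matching. -/
theorem stmt0 {V : Type} [Fintype V] [DecidableEq V] (G : EMG V)
    (hV : 4 < Fintype.card V)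
    (M₁ M₂ M₃ : Finset G.E) (i₁ i₂ i₃ : ℕ)
    (h₁ : G.IsPM M₁) (h₂ : G.IsPM M₂) (h₃ : G.IsPM M₃)
    (hm₁ : G.MonoPM M₁ i₁) (hm₂ : G.MonoPM M₂ i₂) (hm₃ : G.MonoPM M₃ i₃)
    (h12 : i₁ ≠ i₂) (h13 : i₁ ≠ i₃) (h23 : i₂ ≠ i₃) :
    ∃ M : Finset G.E, G.IsPM M ∧ ¬ ∃ i : ℕ, G.MonoPM M i := by
  classical
  have hpm : ∀ c : Fin 3, G.IsPM (![M₁, M₂, M₃] c) := by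
    intro c
    fin_cases c
    · exact h₁
    · exact h₂
    · exact h₃
  have hmono : ∀ c : Fin 3, G.MonoPM (![M₁, M₂, M₃] c) (![i₁, i₂, i₃] c) := by
    intro c
    fin_cases c
    · exact hm₁
    · exact hm₂
    · exact hm₃
  have hii : Function.Injective ![i₁, i₂, i₃] := by
    intro c c' h
    fin_cases c <;> fin_cases c' <;> simp_all
  obtain ⟨j, hcl, hjne⟩ := exists_selector (fun c => G.partner (hpm c))
    (fun c x => G.partner_invol (hpm c) x) (fun c x => G.partner_ne (hpm c) x) hV
  exact G.exists_nonmono_of_selector ![M₁, M₂, M₃] ![i₁, i₂, i₃] hpm hmono hii j hcl hjne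
end

section
/- If an edge-coloured edge-weighted multigraph G with weights in ℂ is g-GHZ (all non-monochromatic vertex colourings have weight 0 and all feasible monochromatic vertex colourings have non-zero weight), then there exists a new weight function w' on the same coloured graph making it a GHZ graph (all feasible monochromatic vertex colourings have weight exactly 1, all non-monochromatic vertex colourings have weight 0) with the same number of feasible monochromatic vertex colourings. -/
open scoped Classical

/-- **Scaling lemma.** A g-GHZ graph can be rescaled to a GHZ graph with the
same dimension (same coloured multigraph, new weights). -/
theorem stmt1 {V : Type} [Fintype V] [DecidableEq V] (G : EMG V)
    (h : G.IsgGHZ) :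
    ∃ w' : G.E → ℂ, (G.reweight w').IsGHZ ∧
      (G.reweight w').dimension = G.dimension := by
  classical
  obtain ⟨h1, h2⟩ := h
  -- if V is empty, every colouring weight is 1
  have hempty : Fintype.card V = 0 → ∀ vc : V → ℕ, G.wcol vc = 1 := by
    intro hc vc
    haveI : IsEmpty V := Fintype.card_eq_zero_iff.mp hc
    haveI : IsEmpty G.E := ⟨fun e => IsEmpty.false (G.fst e)⟩
    have hfil : Finset.univ.filter
        (fun M => G.IsPMOn Finset.univ M ∧ G.Induces M vc) = {∅} := by
      ext M
      simp only [Finset.mem_filter, Finset.mem_univ, true_and, Finset.mem_singleton]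
      constructor
      · intro _; exact Finset.eq_empty_of_isEmpty M
      · rintro rfl
        refine ⟨⟨?_, ?_⟩, ?_⟩
        · intro e he; exact absurd he (Finset.notMem_empty e)
        · intro x hx; exact absurd hx (by simp)
        · intro e he; exact absurd he (Finset.notMem_empty e)
    unfold EMG.wcol EMG.wcolOn
    rw [hfil, Finset.sum_singleton, Finset.prod_empty]
  -- choose scaling factors per colour
  have hβ : ∀ i : ℕ, ∃ β : ℂ,
      (G.Feasible (fun _ => i) → β ^ (Fintype.card V) * G.wcol (fun _ => i) = 1) := by
    intro i
    by_cases hf : G.Feasible (fun _ => i)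
    · rcases Nat.eq_zero_or_pos (Fintype.card V) with h0 | hpos
      · exact ⟨1, fun _ => by simp [h0, hempty h0]⟩
      · obtain ⟨β, hb⟩ := IsAlgClosed.exists_pow_nat_eq ((G.wcol (fun _ => i))⁻¹) hpos
        exact ⟨β, fun _ => by rw [hb, inv_mul_cancel₀ (h1 i hf)]⟩
    · exact ⟨1, fun hf' => absurd hf' hf⟩
  choose β hβs using hβ
  set w' : G.E → ℂ := fun e => G.w e * (β (G.cf e) * β (G.cs e)) with hw'
  -- the key identity : the new weight of any colouring is a global factor times the old one
  have key : ∀ vc : V → ℕ,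
      (G.reweight w').wcol vc = (∏ x : V, β (vc x)) * G.wcol vc := by
    intro vc
    have hrw : (G.reweight w').wcol vc
        = ∑ M ∈ Finset.univ.filter
            (fun M : Finset G.E => G.IsPMOn Finset.univ M ∧ G.Induces M vc),
            ∏ e ∈ M, w' e := rfl
    rw [hrw]
    unfold EMG.wcol EMG.wcolOn
    rw [Finset.mul_sum]
    apply Finset.sum_congr rfl
    intro M hM
    simp only [Finset.mem_filter, Finset.mem_univ, true_and] at hM
    obtain ⟨hPM, hInd⟩ := hM
    have hprod : ∏ x : V, β (vc x) = ∏ e ∈ M, (β (G.cf e) * β (G.cs e)) := by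
      have hcover : (Finset.univ : Finset V)
          = M.biUnion (fun e => {G.fst e, G.snd e}) := by
        ext x
        simp only [Finset.mem_univ, true_iff, Finset.mem_biUnion, Finset.mem_insert,
          Finset.mem_singleton]
        obtain ⟨e, ⟨heM, hinc⟩, -⟩ := hPM.2 x (Finset.mem_univ x)
        exact ⟨e, heM, hinc.imp Eq.symm Eq.symm⟩
      have hdisj : (↑M : Set G.E).PairwiseDisjoint
          (fun e => ({G.fst e, G.snd e} : Finset V)) := by
        intro e he e' he' hne
        simp only [Finset.disjoint_left]
        intro x hx hx'
        simp only [Finset.mem_insert, Finset.mem_singleton] at hx hx'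
        obtain ⟨u, -, hu⟩ := hPM.2 x (Finset.mem_univ x)
        exact hne ((hu e ⟨he, hx.imp Eq.symm Eq.symm⟩).trans
          (hu e' ⟨he', hx'.imp Eq.symm Eq.symm⟩).symm)
      rw [hcover, Finset.prod_biUnion hdisj]
      apply Finset.prod_congr rfl
      intro e he
      rw [Finset.prod_pair (G.noLoop e), (hInd e he).1, (hInd e he).2]
    simp only [hw']
    rw [Finset.prod_mul_distrib, ← hprod, mul_comm]
  refine ⟨w', ⟨?_, ?_⟩, ?_⟩
  · intro i hf
    have hf' : G.Feasible (fun _ => i) := hf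
    rw [key, Finset.prod_const, Finset.card_univ]
    exact hβs i hf'
  · intro vc hvc
    rw [key, h2 vc hvc, mul_zero]
  · rfl
end

section
/- A matching covered graph cannot have vertex connectivity exactly 1: if every edge of a connected graph G with at least one perfect matching lies in some perfect matching, then G has no cut vertex. -/
open scoped Classical

lemma even_card_of_invol {V : Type} [DecidableEq V] :
    ∀ (S : Finset V) (f : V → V), (∀ x, f (f x) = x) → (∀ x ∈ S, f x ≠ x) →
    (∀ x ∈ S, f x ∈ S) → Even S.card := by
  intro S
  induction S using Finset.strongInduction with
  | _ S ih =>
    intro f hff hne hcl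
    rcases S.eq_empty_or_nonempty with rfl | ⟨x, hx⟩
    · simp
    · have hfx : f x ∈ S := hcl x hx
      have hfxx : f x ≠ x := hne x hx
      set S' := (S.erase x).erase (f x) with hS'
      have hsub : S' ⊂ S := by
        refine Finset.ssubset_of_subset_of_ssubset ?_ (Finset.erase_ssubset hx)
        exact Finset.erase_subset _ _
      have hmem : ∀ y ∈ S', y ∈ S := by
        intro y hy
        exact Finset.mem_of_mem_erase (Finset.mem_of_mem_erase hy)
      have hcl' : ∀ y ∈ S', f y ∈ S' := by
        intro y hy
        have hyS := hmem y hy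
        have hyfx : y ≠ f x := (Finset.mem_erase.mp hy).1
        have hyx : y ≠ x := (Finset.mem_erase.mp (Finset.mem_of_mem_erase hy)).1
        refine Finset.mem_erase.mpr ⟨?_, Finset.mem_erase.mpr ⟨?_, hcl y hyS⟩⟩
        · intro h; apply hyx; rw [← hff y, h, hff]
        · intro h; apply hyfx; rw [← hff y, h]
      obtain ⟨k, hk⟩ := ih S' hsub f hff (fun y hy => hne y (hmem y hy)) hcl'
      have h1 : f x ∈ S.erase x := Finset.mem_erase.mpr ⟨hfxx, hfx⟩
      have hcard : S.card = S'.card + 2 := by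
        rw [hS', Finset.card_erase_of_mem h1, Finset.card_erase_of_mem hx]
        have : 2 ≤ S.card := Finset.one_lt_card.mpr ⟨x, hx, f x, hfx, fun h => hfxx h.symm⟩
        omega
      exact ⟨k + 1, by omega⟩

lemma pm_partner {V : Type} {G : SimpleGraph V} {M : G.Subgraph}
    (hM : M.IsPerfectMatching) :
    ∃ f : V → V, (∀ x, M.Adj x (f x)) ∧ (∀ x y, M.Adj x y → y = f x) := by
  have h := SimpleGraph.Subgraph.isPerfectMatching_iff.mp hM
  choose f hf hu using h
  exact ⟨f, hf, hu⟩

lemma parity_even {V : Type} [DecidableEq V] {G : SimpleGraph V} {M : G.Subgraph}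
    (hM : M.IsPerfectMatching) (v : V) (S : Finset V) (hvS : v ∉ S)
    (hcl : ∀ x ∈ S, ∀ y, G.Adj x y → y = v ∨ y ∈ S) :
    (∀ x ∈ S, ¬ M.Adj v x) → Even S.card := by
  intro hno
  obtain ⟨f, hf, hu⟩ := pm_partner hM
  have hff : ∀ x, f (f x) = x := fun x => (hu (f x) x (hf x).symm).symm
  refine even_card_of_invol S f hff (fun x hx h => (h ▸ (hf x)).ne rfl) ?_
  intro x hx
  rcases hcl x hx (f x) (hf x).adj_sub with h | h
  · exact absurd ((h ▸ hf x).symm) (hno x hx)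
  · exact h

lemma parity_odd {V : Type} [DecidableEq V] {G : SimpleGraph V} {M : G.Subgraph}
    (hM : M.IsPerfectMatching) (v : V) (S : Finset V) (hvS : v ∉ S)
    (hcl : ∀ x ∈ S, ∀ y, G.Adj x y → y = v ∨ y ∈ S) :
    (∃ s ∈ S, M.Adj v s) → ¬ Even S.card := by
  rintro ⟨s, hsS, hvs⟩
  obtain ⟨f, hf, hu⟩ := pm_partner hM
  have hff : ∀ x, f (f x) = x := fun x => (hu (f x) x (hf x).symm).symm
  have hfs : f s = v := (hu s v hvs.symm).symm
  have hE : Even (S.erase s).card := by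
    refine even_card_of_invol _ f hff
      (fun x hx h => (h ▸ (hf x)).ne rfl) ?_
    intro x hx
    have hxS := Finset.mem_of_mem_erase hx
    have hxs : x ≠ s := (Finset.mem_erase.mp hx).1
    have hfxv : f x ≠ v := by
      intro h
      apply hxs
      rw [← hff x, h, ← hfs, hff]
    have hfxS : f x ∈ S := by
      rcases hcl x hxS (f x) (hf x).adj_sub with h | h
      · exact absurd h hfxv
      · exact h
    refine Finset.mem_erase.mpr ⟨?_, hfxS⟩
    intro h
    have hxv : x = v := by rw [← hff x, h, hfs]
    exact hvS (hxv ▸ hxS)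
  have hcard : S.card = (S.erase s).card + 1 := by
    rw [Finset.card_erase_of_mem hsS]
    have : 1 ≤ S.card := Finset.card_pos.mpr ⟨s, hsS⟩
    omega
  obtain ⟨k, hk⟩ := hE
  intro ⟨m, hm⟩
  omega


/-- A matching covered graph has no cut vertex: if `G` is connected, has a
perfect matching, and every edge lies in some perfect matching, then removing
any single vertex leaves the graph connected. -/
theorem stmt3 {V : Type} [Fintype V] (G : SimpleGraph V)
    (hconn : G.Connected)
    (hpm : ∃ M : G.Subgraph, M.IsPerfectMatching)
    (hmc : ∀ e ∈ G.edgeSet, ∃ M : G.Subgraph, M.IsPerfectMatching ∧ e ∈ M.edgeSet)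
    (v : V) :
    (G.induce ({v}ᶜ : Set V)).Connected := by
  classical
  by_contra hnc
  obtain ⟨M0, hM0⟩ := hpm
  obtain ⟨f0, hf0, _⟩ := pm_partner hM0
  have hw : f0 v ≠ v := ((hf0 v).adj_sub).ne'
  have hne : Nonempty ({v}ᶜ : Set V) := ⟨⟨f0 v, by simp [hw]⟩⟩
  rw [SimpleGraph.connected_iff] at hnc
  push_neg at hnc
  have hpre : ¬ (G.induce ({v}ᶜ : Set V)).Preconnected := fun h => (hnc h).elim hne.some
  rw [SimpleGraph.Preconnected] at hpre
  push_neg at hpre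
  obtain ⟨a, b, hab⟩ := hpre
  -- reachable sets from a and b within the induced graph
  set S : Set V := {x | ∃ h : x ∈ ({v}ᶜ : Set V), (G.induce ({v}ᶜ : Set V)).Reachable a ⟨x, h⟩}
    with hSdef
  set T : Set V := {x | ∃ h : x ∈ ({v}ᶜ : Set V), (G.induce ({v}ᶜ : Set V)).Reachable b ⟨x, h⟩}
    with hTdef
  have hclS : ∀ x ∈ S, ∀ y, G.Adj x y → y = v ∨ y ∈ S := by
    rintro x ⟨hx, hr⟩ y hadj
    by_cases hyv : y = v
    · exact Or.inl hyv
    · refine Or.inr ⟨by simp [hyv], hr.trans (SimpleGraph.Adj.reachable ?_)⟩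
      exact hadj
  have hclT : ∀ x ∈ T, ∀ y, G.Adj x y → y = v ∨ y ∈ T := by
    rintro x ⟨hx, hr⟩ y hadj
    by_cases hyv : y = v
    · exact Or.inl hyv
    · refine Or.inr ⟨by simp [hyv], hr.trans (SimpleGraph.Adj.reachable ?_)⟩
      exact hadj
  have haS : (a : V) ∈ S := ⟨a.2, by rw [Subtype.coe_eta]⟩
  have hbT : (b : V) ∈ T := ⟨b.2, by rw [Subtype.coe_eta]⟩
  have hvS : v ∉ S := by rintro ⟨h, -⟩; simp at h
  have hvT : v ∉ T := by rintro ⟨h, -⟩; simp at h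
  have hST : ∀ x, x ∈ S → x ∈ T → False := by
    rintro x ⟨hx, hrS⟩ ⟨hx', hrT⟩
    exact hab (hrS.trans hrT.symm)
  have hbS : (b : V) ∉ S := fun h => hST _ h hbT
  have haT : (a : V) ∉ T := fun h => hST _ haS h
  -- find a neighbour of v in S
  obtain ⟨ds, hdsmem, hdsS, hdsS'⟩ :=
    ((hconn.preconnected (a : V) (b : V)).some).exists_boundary_dart S haS hbS
  have hsv : ds.snd = v := by
    rcases hclS ds.fst hdsS ds.snd ds.adj with h | h
    · exact h
    · exact absurd h hdsS'
  have hadjvs : G.Adj v ds.fst := hsv ▸ ds.adj.symm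
  obtain ⟨dt, hdtmem, hdtT, hdtT'⟩ :=
    ((hconn.preconnected (b : V) (a : V)).some).exists_boundary_dart T hbT haT
  have htv : dt.snd = v := by
    rcases hclT dt.fst hdtT dt.snd dt.adj with h | h
    · exact h
    · exact absurd h hdtT'
  have hadjvt : G.Adj v dt.fst := htv ▸ dt.adj.symm
  have htS : dt.fst ∉ S := fun h => hST _ h hdtT
  -- the two matchings
  obtain ⟨M1, hM1, he1⟩ := hmc s(v, ds.fst) ((G.mem_edgeSet).mpr hadjvs)
  obtain ⟨M2, hM2, he2⟩ := hmc s(v, dt.fst) ((G.mem_edgeSet).mpr hadjvt)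
  have hM1adj : M1.Adj v ds.fst := SimpleGraph.Subgraph.mem_edgeSet.mp he1
  have hM2adj : M2.Adj v dt.fst := SimpleGraph.Subgraph.mem_edgeSet.mp he2
  -- parity contradiction on the finset of S
  set F : Finset V := S.toFinite.toFinset with hF
  have hmemF : ∀ x, x ∈ F ↔ x ∈ S := fun x => Set.Finite.mem_toFinset _
  have hvF : v ∉ F := fun h => hvS ((hmemF v).mp h)
  have hclF : ∀ x ∈ F, ∀ y, G.Adj x y → y = v ∨ y ∈ F := by
    intro x hx y hxy
    rcases hclS x ((hmemF x).mp hx) y hxy with h | h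
    · exact Or.inl h
    · exact Or.inr ((hmemF y).mpr h)
  have hodd := parity_odd hM1 v F hvF hclF ⟨ds.fst, (hmemF _).mpr hdsS, hM1adj⟩
  have heven : Even F.card := by
    refine parity_even hM2 v F hvF hclF ?_
    intro x hxF hadj
    obtain ⟨f2, hf2, hu2⟩ := pm_partner hM2
    have h1 : x = f2 v := hu2 v x hadj
    have h2 : dt.fst = f2 v := hu2 v dt.fst hM2adj
    exact htS (h2 ▸ h1 ▸ (hmemF x).mp hxF)
  exact hodd heven
end

section
/- Let G be a graph with a 2-vertex cut {u,v} separating V(G)−{u,v} into nonempty parts A and B with no edges between A and B, where |A| is odd. Then every perfect matching of G either matches some vertex of A to u and some vertex of B to v, or matches some vertex of A to v and some vertex of B to u; consequently the set of perfect matchings of G is the disjoint union of (perfect matchings of G[A∪{u}]) × (perfect matchings of G[B∪{v}]) and (perfect matchings of G[A∪{v}]) × (perfect matchings of G[B∪{u}]). -/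
open scoped Classical

lemma stmt5_aux {V : Type} [Fintype V] [DecidableEq V] (G : EMG V)
    (u v : V) (huv : u ≠ v) (A B : Finset V)
    (huA : u ∉ A) (hvA : v ∉ A)
    (hcover : ∀ x : V, x ∈ A ∨ x ∈ B ∨ x = u ∨ x = v)
    (M : Finset G.E) (hM : G.IsPM M)
    (e0 : G.E) (he0 : e0 ∈ M) (hc0 : G.connectsTo A u e0)
    (huniq : ∀ e ∈ M, G.connectsTo A u e ∨ G.connectsTo A v e → e = e0) :
    (∃ e ∈ M, G.connectsTo A u e) ∧ (∃ e ∈ M, G.connectsTo B v e) ∧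
      ¬ (∃ e ∈ M, G.connectsTo A v e) := by
  have hnoAv : ¬ (∃ e ∈ M, G.connectsTo A v e) := by
    rintro ⟨e, heM, hc⟩
    have := huniq e heM (Or.inr hc)
    subst this
    rcases hc0 with ⟨h1, h2⟩ | ⟨h1, h2⟩ <;> rcases hc with ⟨h3, h4⟩ | ⟨h3, h4⟩
    · exact huv (h2.symm.trans h4)
    · exact huA (h2 ▸ h3)
    · exact huA (h2 ▸ h3)
    · exact huv (h2.symm.trans h4)
  refine ⟨⟨e0, he0, hc0⟩, ?_, hnoAv⟩
  obtain ⟨e1, ⟨he1M, hinc1⟩, -⟩ := hM.2 v (Finset.mem_univ v)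
  have hne1 := G.noLoop e1
  have key : ∀ y : V, (G.fst e1 = y ∧ G.snd e1 = v) ∨ (G.snd e1 = y ∧ G.fst e1 = v) →
      G.connectsTo B v e1 := by
    intro y hy
    have hyv : y ≠ v := by
      rintro rfl
      rcases hy with ⟨h1, h2⟩ | ⟨h1, h2⟩
      · exact hne1 (h1.trans h2.symm)
      · exact hne1 (h2.trans h1.symm)
    have hyA : y ∉ A := by
      intro hyA
      refine hnoAv ⟨e1, he1M, ?_⟩
      rcases hy with ⟨h1, h2⟩ | ⟨h1, h2⟩
      · exact Or.inl ⟨h1 ▸ hyA, h2⟩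
      · exact Or.inr ⟨h1 ▸ hyA, h2⟩
    have hyu : y ≠ u := by
      intro hyu
      obtain ⟨eu, -, heuu⟩ := hM.2 u (Finset.mem_univ u)
      have hinc0 : G.inc e0 u := by
        rcases hc0 with ⟨h1, h2⟩ | ⟨h1, h2⟩
        · exact Or.inr h2
        · exact Or.inl h2
      have hinc1u : G.inc e1 u := by
        rcases hy with ⟨h1, h2⟩ | ⟨h1, h2⟩
        · exact Or.inl (hyu ▸ h1)
        · exact Or.inr (hyu ▸ h1)
      have he10 : e1 = e0 := (heuu e1 ⟨he1M, hinc1u⟩).trans (heuu e0 ⟨he0, hinc0⟩).symm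
      subst he10
      rcases hc0 with ⟨h1, h2⟩ | ⟨h1, h2⟩ <;> rcases hy with ⟨h3, h4⟩ | ⟨h3, h4⟩
      · exact huv (h2.symm.trans h4)
      · exact hvA (h4 ▸ h1)
      · exact hvA (h4 ▸ h1)
      · exact huv (h2.symm.trans h4)
    have hyB : y ∈ B := by
      rcases hcover y with h | h | h | h
      · exact absurd h hyA
      · exact h
      · exact absurd h hyu
      · exact absurd h hyv
    rcases hy with ⟨h1, h2⟩ | ⟨h1, h2⟩
    · exact Or.inl ⟨h1 ▸ hyB, h2⟩
    · exact Or.inr ⟨h1 ▸ hyB, h2⟩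
  rcases hinc1 with h | h
  · exact ⟨e1, he1M, key (G.snd e1) (Or.inr ⟨rfl, h⟩)⟩
  · exact ⟨e1, he1M, key (G.fst e1) (Or.inl ⟨rfl, h⟩)⟩

/-- For a 2-cut `{u,v}` separating `A` (odd) from `B`, every perfect matching
of `G` either matches a vertex of `A` to `u` and a vertex of `B` to `v`, or a
vertex of `A` to `v` and a vertex of `B` to `u`, and exactly one of the two
cases occurs. -/
theorem stmt5 {V : Type} [Fintype V] [DecidableEq V] (G : EMG V)
    (u v : V) (huv : u ≠ v)
    (A B : Finset V)
    (hAne : A.Nonempty) (hBne : B.Nonempty)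
    (hdisj : Disjoint A B)
    (huAB : u ∉ A ∧ u ∉ B) (hvAB : v ∉ A ∧ v ∉ B)
    (hcover : ∀ x : V, x ∈ A ∨ x ∈ B ∨ x = u ∨ x = v)
    (hsep : ∀ e : G.E, ¬ (G.fst e ∈ A ∧ G.snd e ∈ B) ∧ ¬ (G.fst e ∈ B ∧ G.snd e ∈ A))
    (hodd : Odd A.card)
    (M : Finset G.E) (hM : G.IsPM M) :
    (((∃ e ∈ M, G.connectsTo A u e) ∧ (∃ e ∈ M, G.connectsTo B v e)) ∧
      ¬ ((∃ e ∈ M, G.connectsTo A v e) ∧ (∃ e ∈ M, G.connectsTo B u e))) ∨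
    (((∃ e ∈ M, G.connectsTo A v e) ∧ (∃ e ∈ M, G.connectsTo B u e)) ∧
      ¬ ((∃ e ∈ M, G.connectsTo A u e) ∧ (∃ e ∈ M, G.connectsTo B v e))) := by
  obtain ⟨hMin, hMcov⟩ := hM
  set f : G.E → ℕ := fun e => (A.filter (fun x => G.inc e x)).card with hf
  -- description of the filter
  have hfilt : ∀ e : G.E, A.filter (fun x => G.inc e x)
      = ({G.fst e, G.snd e} : Finset V).filter (· ∈ A) := by
    intro e
    refine Finset.ext fun x => ?_
    simp only [Finset.mem_filter]; simp only [Finset.mem_insert, Finset.mem_singleton, EMG.inc]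
    constructor
    · rintro ⟨h1, h2 | h2⟩ <;> [exact ⟨Or.inl h2.symm, h1⟩; exact ⟨Or.inr h2.symm, h1⟩]
    · rintro ⟨h1 | h1, h2⟩ <;> [exact ⟨h2, Or.inl h1.symm⟩; exact ⟨h2, Or.inr h1.symm⟩]
  have hf1 : ∀ e : G.E, f e = 1 ↔
      ((G.fst e ∈ A ∧ G.snd e ∉ A) ∨ (G.snd e ∈ A ∧ G.fst e ∉ A)) := by
    intro e
    have hne := G.noLoop e
    rw [hf]
    simp only
    rw [hfilt e, Finset.filter_insert, Finset.filter_singleton]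
    split_ifs with h1 h2 h2 <;>
      simp [Finset.card_insert_of_notMem, hne, h1, h2, Finset.mem_singleton]
  have hfle : ∀ e : G.E, f e ≤ 2 := by
    intro e
    rw [hf]
    simp only
    rw [hfilt e]
    exact (Finset.card_filter_le _ _).trans
      ((Finset.card_insert_le _ _).trans (by simp))
  -- A is the disjoint union of the matched pairs
  have hA_eq : A = M.biUnion (fun e => A.filter (fun x => G.inc e x)) := by
    ext x
    simp only [Finset.mem_biUnion, Finset.mem_filter]
    constructor
    · intro hx
      obtain ⟨e, ⟨heM, hinc⟩, -⟩ := hMcov x (Finset.mem_univ x)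
      exact ⟨e, heM, hx, hinc⟩
    · rintro ⟨e, -, hx, -⟩; exact hx
  have hcard : A.card = ∑ e ∈ M, f e := by
    rw [hA_eq]
    refine Finset.card_biUnion ?_
    intro e1 h1 e2 h2 hne
    simp only [Function.onFun]; rw [Finset.disjoint_left]
    intro x hx1 hx2
    rw [Finset.mem_filter] at hx1 hx2
    obtain ⟨e, -, heu⟩ := hMcov x (Finset.mem_univ x)
    exact hne ((heu e1 ⟨h1, hx1.2⟩).trans (heu e2 ⟨h2, hx2.2⟩).symm)
  -- the set of edges crossing from A
  set M1 : Finset G.E := M.filter (fun e => f e = 1) with hM1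
  have hM1odd : Odd M1.card := by
    have h1 : (∑ e ∈ M, f e) % 2 = (∑ e ∈ M, f e % 2) % 2 := Finset.sum_nat_mod _ _ _
    have h2 : (∑ e ∈ M, f e % 2) = ∑ e ∈ M, (if f e = 1 then 1 else 0) := by
      refine Finset.sum_congr rfl fun e _ => ?_
      have := hfle e
      split_ifs with h <;> omega
    have h3 : M1.card = ∑ e ∈ M, (if f e = 1 then 1 else 0) := by
      rw [hM1, Finset.card_filter]
    rw [Nat.odd_iff] at hodd ⊢
    omega
  -- each M1 edge touches u or v
  have hM1touch : ∀ e ∈ M1, G.connectsTo A u e ∨ G.connectsTo A v e := by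
    intro e he
    rw [hM1, Finset.mem_filter] at he
    rcases (hf1 e).mp he.2 with ⟨h1, h2⟩ | ⟨h1, h2⟩
    · have hB : G.snd e ∉ B := fun hB => (hsep e).1 ⟨h1, hB⟩
      rcases hcover (G.snd e) with h | h | h | h
      · exact absurd h h2
      · exact absurd h hB
      · exact Or.inl (Or.inl ⟨h1, h⟩)
      · exact Or.inr (Or.inl ⟨h1, h⟩)
    · have hB : G.fst e ∉ B := fun hB => (hsep e).2 ⟨hB, h1⟩
      rcases hcover (G.fst e) with h | h | h | h
      · exact absurd h h2
      · exact absurd h hB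
      · exact Or.inl (Or.inr ⟨h1, h⟩)
      · exact Or.inr (Or.inr ⟨h1, h⟩)
  have hM1le : M1.card ≤ 2 := by
    have hsub : M1 ⊆ M.filter (fun e => G.inc e u) ∪ M.filter (fun e => G.inc e v) := by
      intro e he
      have heM : e ∈ M := (Finset.mem_filter.mp he).1
      rcases hM1touch e he with h | h
      · refine Finset.mem_union_left _ (Finset.mem_filter.mpr ⟨heM, ?_⟩)
        rcases h with ⟨-, h2⟩ | ⟨-, h2⟩ <;> [exact Or.inr h2; exact Or.inl h2]
      · refine Finset.mem_union_right _ (Finset.mem_filter.mpr ⟨heM, ?_⟩)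
        rcases h with ⟨-, h2⟩ | ⟨-, h2⟩ <;> [exact Or.inr h2; exact Or.inl h2]
    have hu1 : (M.filter (fun e => G.inc e u)).card ≤ 1 := by
      refine Finset.card_le_one.mpr fun a ha b hb => ?_
      rw [Finset.mem_filter] at ha hb
      obtain ⟨e, -, heu⟩ := hMcov u (Finset.mem_univ u)
      exact (heu a ha).trans (heu b hb).symm
    have hv1 : (M.filter (fun e => G.inc e v)).card ≤ 1 := by
      refine Finset.card_le_one.mpr fun a ha b hb => ?_
      rw [Finset.mem_filter] at ha hb
      obtain ⟨e, -, heu⟩ := hMcov v (Finset.mem_univ v)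
      exact (heu a ha).trans (heu b hb).symm
    calc M1.card ≤ _ := Finset.card_le_card hsub
      _ ≤ _ := Finset.card_union_le _ _
      _ ≤ 2 := by omega
  have hM1card : M1.card = 1 := by
    obtain ⟨k, hk⟩ := hM1odd
    omega
  obtain ⟨e0, he0⟩ := Finset.card_eq_one.mp hM1card
  have he0M1 : e0 ∈ M1 := he0 ▸ Finset.mem_singleton_self e0
  have he0M : e0 ∈ M := (Finset.mem_filter.mp he0M1).1
  have huniq : ∀ e ∈ M, G.connectsTo A u e ∨ G.connectsTo A v e → e = e0 := by
    intro e heM hc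
    have hfe : f e = 1 := by
      refine (hf1 e).mpr ?_
      rcases hc with (⟨h1, h2⟩ | ⟨h1, h2⟩) | (⟨h1, h2⟩ | ⟨h1, h2⟩)
      · exact Or.inl ⟨h1, h2 ▸ huAB.1⟩
      · exact Or.inr ⟨h1, h2 ▸ huAB.1⟩
      · exact Or.inl ⟨h1, h2 ▸ hvAB.1⟩
      · exact Or.inr ⟨h1, h2 ▸ hvAB.1⟩
    have : e ∈ M1 := Finset.mem_filter.mpr ⟨heM, hfe⟩
    rw [he0, Finset.mem_singleton] at this
    exact this
  rcases hM1touch e0 he0M1 with hc0 | hc0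
  · left
    obtain ⟨h1, h2, h3⟩ := stmt5_aux G u v huv A B huAB.1 hvAB.1 hcover M
      ⟨hMin, hMcov⟩ e0 he0M hc0 huniq
    exact ⟨⟨h1, h2⟩, fun h => h3 h.1⟩
  · right
    have hcover' : ∀ x : V, x ∈ A ∨ x ∈ B ∨ x = v ∨ x = u := by
      intro x; rcases hcover x with h | h | h | h <;> tauto
    have huniq' : ∀ e ∈ M, G.connectsTo A v e ∨ G.connectsTo A u e → e = e0 := by
      intro e heM hc; exact huniq e heM hc.symm
    obtain ⟨h1, h2, h3⟩ := stmt5_aux G v u huv.symm A B hvAB.1 huAB.1 hcover' M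
      ⟨hMin, hMcov⟩ e0 he0M hc0 huniq'
    exact ⟨⟨h1, h2⟩, fun h => h3 h.1⟩
end

section
/- Let G be a GHZ multigraph with a 2-vertex cut {u,v} separating A (odd size) from B, and suppose there are at least 3 feasible monochromatic vertex colourings. Then there exist two of these colours, say 1 and 2, such that w(2_A 1_u)·w(2_B 1_v)·w(2_A 1_v)·w(2_B 1_u) ≠ 0, where w(i_X j_y) denotes the weight of the colouring assigning colour i to all of X and colour j to y in the induced subgraph G[X∪{y}]. -/
open scoped Classical

/-!
Since `|A|` is odd and every neighbour of `A` outside `A` is `u` or `v`, a perfect matching of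
`G` matches an odd number, hence exactly one, of the vertices of `A` to `{u, v}`. So it splits
into perfect matchings of `A ∪ {u}` and `B ∪ {v}`, or of `A ∪ {v}` and `B ∪ {u}`, and for every
vertex colouring `c` that is constant on `A` and on `B`,
`w(c) = w(c_A c_u) w(c_B c_v) + w(c_A c_v) w(c_B c_u)`.

For a feasible monochromatic colour `i` the left side is `1`, so one of the two products is
nonzero; by pigeonhole two of the three colours, `a` and `b`, give a nonzero product of the
same type, say the first. The non-monochromatic colourings `a_A b_B a_u b_v`, `b_A a_B b_u a_v`
and `b_A b_B a_u a_v` have weight `0`, and in each of the three resulting identities one product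
is already known to be nonzero, so the other one is nonzero as well.
-/

lemma Finset.exists_ne_and_or_of_two_lt_card {α : Type*} {s : Finset α} (hs : 2 < s.card)
    {p q : α → Prop} (h : ∀ i ∈ s, p i ∨ q i) :
    ∃ a ∈ s, ∃ b ∈ s, a ≠ b ∧ (p a ∧ p b ∨ q a ∧ q b) := by
  obtain ⟨a, ha, b, hb, hab, hp⟩ := Finset.exists_ne_map_eq_of_card_lt_of_maps_to
    (t := Finset.univ) (by simpa using hs) (f := p) fun _ _ => Finset.mem_univ _
  refine ⟨a, ha, b, hb, hab, ?_⟩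
  by_cases hpa : p a
  · exact Or.inl ⟨hpa, hp ▸ hpa⟩
  · exact Or.inr ⟨(h a ha).resolve_left hpa, (h b hb).resolve_left (hp ▸ hpa)⟩

namespace EMG

variable {V : Type} [DecidableEq V]

def cutColouring (u v : V) (A : Finset V) (α β γ δ : ℕ) : V → ℕ :=
  fun x => if x = u then γ else if x = v then δ else if x ∈ A then α else β

lemma cutColouring_self (u v : V) (A : Finset V) (i : ℕ) :
    cutColouring u v A i i i i = fun _ => i := by
  funext x
  simp [cutColouring]

variable [Fintype V] {G : EMG V}

lemma inc_fst (e : G.E) : G.inc e (G.fst e) := Or.inl rfl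

lemma inc_snd (e : G.E) : G.inc e (G.snd e) := Or.inr rfl

lemma inc_of_connectsTo {S : Finset V} {x : V} {e : G.E} (h : G.connectsTo S x e) :
    G.inc e x := by
  rcases h with h | h
  exacts [Or.inr h.2, Or.inl h.2]

lemma bothIn_of_inc {S : Finset V} {e : G.E} (h : G.bothIn S e) {x : V} (hx : G.inc e x) :
    x ∈ S := by
  rcases hx with rfl | rfl
  exacts [h.1, h.2]

lemma not_bothIn_singleton (x : V) (e : G.E) : ¬ G.bothIn {x} e := fun h =>
  G.noLoop e ((Finset.mem_singleton.1 h.1).trans (Finset.mem_singleton.1 h.2).symm)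

lemma card_filter_inc (S : Finset V) (e : G.E) :
    (S.filter (G.inc e)).card =
      (if G.fst e ∈ S then 1 else 0) + (if G.snd e ∈ S then 1 else 0) := by
  have hfilter : S.filter (G.inc e) = S.filter (fun x => G.fst e = x ∨ G.snd e = x) := by
    ext; simp [inc]
  rw [hfilter, Finset.filter_or]
  simp only [Finset.filter_eq]
  split_ifs <;> simp [G.noLoop e]

lemma IsPMOn.eq_of_inc {S : Finset V} {M : Finset G.E} (hM : G.IsPMOn S M) {x : V}
    (hx : x ∈ S) {e e' : G.E} (he : e ∈ M) (he' : e' ∈ M) (hxe : G.inc e x)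
    (hxe' : G.inc e' x) : e = e' :=
  (hM.2 x hx).unique ⟨he, hxe⟩ ⟨he', hxe'⟩

lemma IsPM.card_filter_connectsTo_le_one {M : Finset G.E} (hM : G.IsPM M) (S : Finset V)
    (x : V) : (M.filter (G.connectsTo S x)).card ≤ 1 :=
  Finset.card_le_one.2 fun _ he _ he' => hM.eq_of_inc (Finset.mem_univ x)
    (Finset.mem_filter.1 he).1 (Finset.mem_filter.1 he').1
    (inc_of_connectsTo (Finset.mem_filter.1 he).2)
    (inc_of_connectsTo (Finset.mem_filter.1 he').2)

lemma card_eq_sum_card_filter_inc {S : Finset V} {M : Finset G.E}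
    (hM : ∀ x ∈ S, ∃! e, e ∈ M ∧ G.inc e x) :
    S.card = ∑ e ∈ M, (S.filter (G.inc e)).card := by
  have hone : ∀ x ∈ S, (M.filter (G.inc · x)).card = 1 := fun x hx => by
    obtain ⟨e, he, huniq⟩ := hM x hx
    exact Finset.card_eq_one.2 ⟨e, Finset.eq_singleton_iff_unique_mem.2
      ⟨Finset.mem_filter.2 he, fun e' he' => huniq e' (Finset.mem_filter.1 he')⟩⟩
  rw [Finset.card_eq_sum_ones, Finset.sum_congr rfl fun x hx => (hone x hx).symm]
  exact Finset.sum_card_bipartiteAbove_eq_sum_card_bipartiteBelow _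

def SplitsAlong (G : EMG V) (S T : Finset V) (M : Finset G.E) : Prop :=
  ∀ e ∈ M, G.bothIn S e ∨ G.bothIn T e

lemma IsPMOn.existsUnique_inc_union {S T : Finset V} (hST : Disjoint S T) {M N : Finset G.E}
    (hM : G.IsPMOn S M) (hN : G.IsPMOn T N) {x : V} (hx : x ∈ S) :
    ∃! e, e ∈ M ∪ N ∧ G.inc e x := by
  obtain ⟨e, he, huniq⟩ := hM.2 x hx
  refine ⟨e, ⟨Finset.mem_union_left _ he.1, he.2⟩, fun e' ⟨he', hxe'⟩ => ?_⟩
  rcases Finset.mem_union.1 he' with he' | he'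
  · exact huniq e' ⟨he', hxe'⟩
  · exact absurd (bothIn_of_inc (hN.1 e' he') hxe') (Finset.disjoint_left.1 hST hx)

lemma IsPMOn.union {S T : Finset V} (hST : Disjoint S T) {M N : Finset G.E}
    (hM : G.IsPMOn S M) (hN : G.IsPMOn T N) : G.IsPMOn (S ∪ T) (M ∪ N) := by
  refine ⟨fun e he => ?_, fun x hx => ?_⟩
  · rcases Finset.mem_union.1 he with he | he
    · exact ⟨Finset.mem_union_left _ (hM.1 e he).1, Finset.mem_union_left _ (hM.1 e he).2⟩
    · exact ⟨Finset.mem_union_right _ (hN.1 e he).1, Finset.mem_union_right _ (hN.1 e he).2⟩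
  · rcases Finset.mem_union.1 hx with hx | hx
    · exact hM.existsUnique_inc_union hST hN hx
    · rw [Finset.union_comm]
      exact hN.existsUnique_inc_union hST.symm hM hx

lemma IsPMOn.filter_bothIn {S T : Finset V} (hST : Disjoint S T) {M : Finset G.E}
    (hM : G.IsPMOn (S ∪ T) M) (hsplit : G.SplitsAlong S T M) :
    G.IsPMOn S (M.filter (G.bothIn S)) := by
  refine ⟨fun e he => (Finset.mem_filter.1 he).2, fun x hx => ?_⟩
  obtain ⟨e, ⟨he, hxe⟩, huniq⟩ := hM.2 x (Finset.mem_union_left _ hx)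
  have heS : G.bothIn S e := (hsplit e he).resolve_right
    fun h => Finset.disjoint_left.1 hST hx (bothIn_of_inc h hxe)
  exact ⟨e, ⟨Finset.mem_filter.2 ⟨he, heS⟩, hxe⟩,
    fun e' ⟨he', hxe'⟩ => huniq e' ⟨(Finset.mem_filter.1 he').1, hxe'⟩⟩

lemma filter_bothIn_union {S T : Finset V} (hST : Disjoint S T) {M N : Finset G.E}
    (hM : ∀ e ∈ M, G.bothIn S e) (hN : ∀ e ∈ N, G.bothIn T e) :
    (M ∪ N).filter (G.bothIn S) = M := by
  ext e
  simp only [Finset.mem_filter, Finset.mem_union]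
  exact ⟨fun ⟨he, heS⟩ => he.resolve_right
    fun heN => Finset.disjoint_left.1 hST heS.1 (hN e heN).1, fun he => ⟨Or.inl he, hM e he⟩⟩

lemma Induces.union {M N : Finset G.E} {vc : V → ℕ} (hM : G.Induces M vc)
    (hN : G.Induces N vc) : G.Induces (M ∪ N) vc := by
  intro e he
  rcases Finset.mem_union.1 he with he | he
  exacts [hM e he, hN e he]

lemma Induces.mono {M N : Finset G.E} {vc : V → ℕ} (hN : G.Induces N vc) (hMN : M ⊆ N) :
    G.Induces M vc :=
  fun e he => hN e (hMN he)

lemma wcolOn_mul_wcolOn {S T : Finset V} (hST : Disjoint S T) (vc : V → ℕ) :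
    G.wcolOn S vc * G.wcolOn T vc =
      ∑ M ∈ Finset.univ.filter (fun M : Finset G.E =>
          (G.IsPMOn (S ∪ T) M ∧ G.Induces M vc) ∧ G.SplitsAlong S T M),
        ∏ e ∈ M, G.w e := by
  unfold wcolOn
  rw [Finset.sum_mul_sum, ← Finset.sum_product']
  refine Finset.sum_bij' (fun p _ => p.1 ∪ p.2)
    (fun M _ => (M.filter (G.bothIn S), M.filter (G.bothIn T))) ?_ ?_ ?_ ?_ ?_
  · rintro ⟨M, N⟩ hMN
    simp only [Finset.mem_product, Finset.mem_filter, Finset.mem_univ, true_and] at hMN ⊢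
    obtain ⟨⟨hM, hMc⟩, hN, hNc⟩ := hMN
    refine ⟨⟨hM.union hST hN, hMc.union hNc⟩, fun e he => ?_⟩
    rcases Finset.mem_union.1 he with he | he
    exacts [Or.inl (hM.1 e he), Or.inr (hN.1 e he)]
  · intro M hM
    simp only [Finset.mem_product, Finset.mem_filter, Finset.mem_univ, true_and] at hM ⊢
    obtain ⟨⟨hM, hMc⟩, hsplit⟩ := hM
    refine ⟨⟨hM.filter_bothIn hST hsplit, hMc.mono (Finset.filter_subset _ _)⟩,
      (Finset.union_comm S T ▸ hM).filter_bothIn hST.symm (fun e he => (hsplit e he).symm),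
      hMc.mono (Finset.filter_subset _ _)⟩
  · rintro ⟨M, N⟩ hMN
    simp only [Finset.mem_product, Finset.mem_filter, Finset.mem_univ, true_and] at hMN
    obtain ⟨⟨hM, -⟩, hN, -⟩ := hMN
    rw [Finset.union_comm M N]
    exact Prod.ext (Finset.union_comm M N ▸ filter_bothIn_union hST hM.1 hN.1)
      (filter_bothIn_union hST.symm hN.1 hM.1)
  · intro M hM
    simp only [Finset.mem_filter, Finset.mem_univ, true_and] at hM
    rw [← Finset.filter_or, Finset.filter_true_of_mem hM.2]
  · rintro ⟨M, N⟩ hMN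
    simp only [Finset.mem_product, Finset.mem_filter, Finset.mem_univ, true_and] at hMN
    obtain ⟨⟨hM, -⟩, hN, -⟩ := hMN
    exact (Finset.prod_union (Finset.disjoint_left.2 fun e heM heN =>
      Finset.disjoint_left.1 hST (hM.1 e heM).1 (hN.1 e heN).1)).symm

lemma wcolOn_congr {S : Finset V} {vc vc' : V → ℕ} (h : ∀ x ∈ S, vc x = vc' x) :
    G.wcolOn S vc = G.wcolOn S vc' := by
  refine Finset.sum_congr (Finset.filter_congr fun M _ => and_congr_right fun hM => ?_)
    fun _ _ => rfl
  refine forall₂_congr fun e he => ?_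
  rw [h _ (hM.1 e he).1, h _ (hM.1 e he).2]

/-- The paper's `w(i_X j_y)`. -/
noncomputable def wcolOnInsert (G : EMG V) (X : Finset V) (y : V) (i j : ℕ) : ℂ :=
  G.wcolOn (insert y X) (fun x => if x = y then j else i)

lemma IsGHZ.wcol_eq_zero_of_apply_ne (hG : G.IsGHZ) {vc : V → ℕ} {x y : V}
    (h : vc x ≠ vc y) : G.wcol vc = 0 :=
  hG.2 vc fun ⟨_, hi⟩ => h ((hi x).trans (hi y).symm)

structure IsTwoCut (G : EMG V) (u v : V) (A B : Finset V) : Prop where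
  ne : u ≠ v
  disjoint : Disjoint A B
  u_notMem : u ∉ A ∧ u ∉ B
  v_notMem : v ∉ A ∧ v ∉ B
  cover : ∀ x : V, x ∈ A ∨ x ∈ B ∨ x = u ∨ x = v
  sep : ∀ e : G.E, ¬ (G.fst e ∈ A ∧ G.snd e ∈ B) ∧ ¬ (G.fst e ∈ B ∧ G.snd e ∈ A)

namespace IsTwoCut

variable {u v : V} {A B : Finset V}

lemma symm (hcut : G.IsTwoCut u v A B) : G.IsTwoCut v u A B where
  ne := hcut.ne.symm
  disjoint := hcut.disjoint
  u_notMem := hcut.v_notMem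
  v_notMem := hcut.u_notMem
  cover x := by have := hcut.cover x; tauto
  sep := hcut.sep

lemma card_filter_inc_eq (hcut : G.IsTwoCut u v A B) (e : G.E) :
    (A.filter (G.inc e)).card = 2 * (if G.bothIn A e then 1 else 0) +
      (if G.connectsTo A u e then 1 else 0) + (if G.connectsTo A v e then 1 else 0) := by
  have hloop := G.noLoop e
  have hsep := hcut.sep e
  have huv := hcut.ne
  have huA := hcut.u_notMem.1
  have hvA := hcut.v_notMem.1
  rw [card_filter_inc]
  unfold bothIn connectsTo
  rcases hcut.cover (G.fst e) with h₁ | h₁ | h₁ | h₁ <;>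
    rcases hcut.cover (G.snd e) with h₂ | h₂ | h₂ | h₂ <;>
    grind

lemma card_eq_of_isPM {M : Finset G.E} (hcut : G.IsTwoCut u v A B) (hM : G.IsPM M) :
    A.card = 2 * (M.filter (G.bothIn A)).card + (M.filter (G.connectsTo A u)).card +
      (M.filter (G.connectsTo A v)).card := by
  rw [card_eq_sum_card_filter_inc fun x _ => hM.2 x (Finset.mem_univ x),
    Finset.sum_congr rfl fun e _ => hcut.card_filter_inc_eq e, Finset.sum_add_distrib,
    Finset.sum_add_distrib, ← Finset.mul_sum]
  simp only [Finset.card_filter]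

lemma exists_connectsTo {M : Finset G.E} (hcut : G.IsTwoCut u v A B) (hodd : Odd A.card)
    (hM : G.IsPM M) :
    (∃ e ∈ M, G.connectsTo A u e) ∧ (∀ e ∈ M, ¬ G.connectsTo A v e) ∨
      (∃ e ∈ M, G.connectsTo A v e) ∧ (∀ e ∈ M, ¬ G.connectsTo A u e) := by
  have hcard := hcut.card_eq_of_isPM hM
  have hu := hM.card_filter_connectsTo_le_one A u
  have hv := hM.card_filter_connectsTo_le_one A v
  simp only [← Finset.filter_nonempty_iff, ← Finset.filter_eq_empty_iff, ← Finset.card_pos,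
    ← Finset.card_eq_zero]
  obtain ⟨k, hk⟩ := hodd
  omega

lemma not_inc_of_inc {M : Finset G.E} (hcut : G.IsTwoCut u v A B) (hM : G.IsPM M)
    {e₀ : G.E} (he₀ : e₀ ∈ M) (hu : G.connectsTo A u e₀)
    (hv : ∀ e ∈ M, ¬ G.connectsTo A v e) {e : G.E} (he : e ∈ M) {x y : V}
    (hx : x ∈ insert u A) (hy : y ∈ insert v B) (hxe : G.inc e x) : ¬ G.inc e y := by
  have hAB := Finset.disjoint_left.1 hcut.disjoint
  have huB := hcut.u_notMem.2
  have hvA := hcut.v_notMem.1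
  intro hye
  rcases Finset.mem_insert.1 hx with rfl | hxA
  · obtain rfl := hM.eq_of_inc (Finset.mem_univ x) he he₀ hxe (inc_of_connectsTo hu)
    unfold connectsTo inc at *
    grind
  · rcases Finset.mem_insert.1 hy with rfl | hyB
    · apply hv e he
      unfold connectsTo inc at *
      grind
    · have := hcut.sep e
      unfold inc at *
      grind

lemma splitsAlong_of_connectsTo {M : Finset G.E} (hcut : G.IsTwoCut u v A B) (hM : G.IsPM M)
    {e₀ : G.E} (he₀ : e₀ ∈ M) (hu : G.connectsTo A u e₀)
    (hv : ∀ e ∈ M, ¬ G.connectsTo A v e) :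
    G.SplitsAlong (insert u A) (insert v B) M := by
  intro e he
  have hmem : ∀ x, x ∈ insert u A ∨ x ∈ insert v B := fun x => by
    have := hcut.cover x
    simp only [Finset.mem_insert]
    tauto
  have hcross : ∀ {x y}, x ∈ insert u A → y ∈ insert v B → G.inc e x → ¬ G.inc e y :=
    hcut.not_inc_of_inc hM he₀ hu hv he
  rcases hmem (G.fst e) with h₁ | h₁ <;> rcases hmem (G.snd e) with h₂ | h₂
  · exact Or.inl ⟨h₁, h₂⟩
  · exact absurd (inc_snd e) (hcross h₁ h₂ (inc_fst e))
  · exact absurd (inc_fst e) (hcross h₂ h₁ (inc_snd e))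
  · exact Or.inr ⟨h₁, h₂⟩

lemma splitsAlong_or {M : Finset G.E} (hcut : G.IsTwoCut u v A B) (hodd : Odd A.card)
    (hM : G.IsPM M) :
    G.SplitsAlong (insert u A) (insert v B) M ∨ G.SplitsAlong (insert v A) (insert u B) M := by
  rcases hcut.exists_connectsTo hodd hM with ⟨⟨e₀, he₀, hu⟩, hv⟩ | ⟨⟨e₀, he₀, hv⟩, hu⟩
  · exact Or.inl (hcut.splitsAlong_of_connectsTo hM he₀ hu hv)
  · exact Or.inr (hcut.symm.splitsAlong_of_connectsTo hM he₀ hv hu)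

lemma not_splitsAlong_and {M : Finset G.E} (hcut : G.IsTwoCut u v A B) (hM : G.IsPM M) :
    ¬ (G.SplitsAlong (insert u A) (insert v B) M ∧
      G.SplitsAlong (insert v A) (insert u B) M) := by
  rintro ⟨h₁, h₂⟩
  obtain ⟨e, ⟨he, hve⟩, -⟩ := hM.2 v (Finset.mem_univ v)
  have hvuA : v ∉ insert u A := by simp [hcut.ne.symm, hcut.v_notMem.1]
  have hvuB : v ∉ insert u B := by simp [hcut.ne.symm, hcut.v_notMem.2]
  have hB := (h₁ e he).resolve_left fun h => hvuA (bothIn_of_inc h hve)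
  have hA := (h₂ e he).resolve_right fun h => hvuB (bothIn_of_inc h hve)
  have hinter : insert v B ∩ insert v A = {v} := by
    rw [← Finset.insert_inter_distrib, Finset.disjoint_iff_inter_eq_empty.1 hcut.disjoint.symm]
    rfl
  exact not_bothIn_singleton v e (hinter ▸ ⟨Finset.mem_inter.2 ⟨hB.1, hA.1⟩,
    Finset.mem_inter.2 ⟨hB.2, hA.2⟩⟩)

lemma wcol_eq (hcut : G.IsTwoCut u v A B) (hodd : Odd A.card) (vc : V → ℕ) :
    G.wcol vc = G.wcolOn (insert u A) vc * G.wcolOn (insert v B) vc +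
      G.wcolOn (insert v A) vc * G.wcolOn (insert u B) vc := by
  obtain ⟨huA, huB⟩ := hcut.u_notMem
  obtain ⟨hvA, hvB⟩ := hcut.v_notMem
  have huniv : ∀ {x y : V}, (x = u ∧ y = v ∨ x = v ∧ y = u) →
      insert x A ∪ insert y B = Finset.univ := fun hxy =>
    Finset.eq_univ_of_forall fun z => by
      have := hcut.cover z
      simp only [Finset.mem_union, Finset.mem_insert]
      grind
  rw [G.wcolOn_mul_wcolOn (by simp [hcut.ne.symm, huB, hvA, hcut.disjoint]),
    G.wcolOn_mul_wcolOn (by simp [hcut.ne, huA, hvB, hcut.disjoint]),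
    huniv (Or.inl ⟨rfl, rfl⟩), huniv (Or.inr ⟨rfl, rfl⟩), wcol, wcolOn,
    ← Finset.sum_filter_add_sum_filter_not _ (G.SplitsAlong (insert u A) (insert v B)),
    Finset.filter_filter, Finset.filter_filter]
  congr 2
  refine Finset.filter_congr fun M _ => and_congr_right fun hM => ?_
  exact ⟨(hcut.splitsAlong_or hodd hM.1).resolve_left,
    fun h₂ h₁ => hcut.not_splitsAlong_and hM.1 ⟨h₁, h₂⟩⟩

lemma wcol_cutColouring (hcut : G.IsTwoCut u v A B) (hodd : Odd A.card) (α β γ δ : ℕ) :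
    G.wcol (cutColouring u v A α β γ δ) =
      G.wcolOnInsert A u α γ * G.wcolOnInsert B v β δ +
        G.wcolOnInsert A v α δ * G.wcolOnInsert B u β γ := by
  have hAB := Finset.disjoint_left.1 hcut.disjoint
  have huv := hcut.ne
  obtain ⟨huA, huB⟩ := hcut.u_notMem
  obtain ⟨hvA, hvB⟩ := hcut.v_notMem
  rw [hcut.wcol_eq hodd]
  congr 2 <;> refine G.wcolOn_congr fun x hx => ?_ <;> simp only [Finset.mem_insert] at hx <;>
    unfold cutColouring <;> grind

lemma wcolOnInsert_add_eq_zero (hcut : G.IsTwoCut u v A B) (hodd : Odd A.card)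
    (hG : G.IsGHZ) {α β γ δ : ℕ} {x y : V}
    (h : cutColouring u v A α β γ δ x ≠ cutColouring u v A α β γ δ y) :
    G.wcolOnInsert A u α γ * G.wcolOnInsert B v β δ +
      G.wcolOnInsert A v α δ * G.wcolOnInsert B u β γ = 0 := by
  rw [← hcut.wcol_cutColouring hodd, hG.wcol_eq_zero_of_apply_ne h]

lemma wcolOnInsert_ne_zero_or (hcut : G.IsTwoCut u v A B) (hodd : Odd A.card)
    (hG : G.IsGHZ) {i : ℕ} (hi : G.Feasible fun _ => i) :
    G.wcolOnInsert A u i i * G.wcolOnInsert B v i i ≠ 0 ∨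
      G.wcolOnInsert A v i i * G.wcolOnInsert B u i i ≠ 0 := by
  have h := hcut.wcol_cutColouring hodd i i i i
  rw [cutColouring_self, hG.1 i hi] at h
  by_contra! h₀
  rw [h₀.1, h₀.2, add_zero] at h
  exact one_ne_zero h

lemma wcolOnInsert_prod_ne_zero (hcut : G.IsTwoCut u v A B) (hodd : Odd A.card)
    (hG : G.IsGHZ) {a b : ℕ} (hab : a ≠ b)
    (ha : G.wcolOnInsert A u a a * G.wcolOnInsert B v a a ≠ 0)
    (hb : G.wcolOnInsert A u b b * G.wcolOnInsert B v b b ≠ 0) :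
    G.wcolOnInsert A u b a * G.wcolOnInsert B v b a * G.wcolOnInsert A v b a *
      G.wcolOnInsert B u b a ≠ 0 := by
  have huv := hcut.ne
  obtain ⟨x, hx⟩ := Finset.card_pos.1 hodd.pos
  have hxu : x ≠ u := fun h => hcut.u_notMem.1 (h ▸ hx)
  have hxv : x ≠ v := fun h => hcut.v_notMem.1 (h ▸ hx)
  have ne_zero_iff {p q : ℂ} (h : p + q = 0) : p ≠ 0 ↔ q ≠ 0 := by
    rw [eq_neg_of_add_eq_zero_left h, neg_ne_zero]
  have hBu : G.wcolOnInsert B u b a ≠ 0 := right_ne_zero_of_mul <| (ne_zero_iff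
    (hcut.wcolOnInsert_add_eq_zero hodd hG (α := a) (β := b) (x := u) (y := v)
      (by simpa [cutColouring, huv.symm] using hab))).1
    (mul_ne_zero (left_ne_zero_of_mul ha) (right_ne_zero_of_mul hb))
  have hAv : G.wcolOnInsert A v b a ≠ 0 := left_ne_zero_of_mul <| (ne_zero_iff
    (hcut.wcolOnInsert_add_eq_zero hodd hG (α := b) (β := a) (x := u) (y := v)
      (by simpa [cutColouring, huv.symm] using hab.symm))).1
    (mul_ne_zero (left_ne_zero_of_mul hb) (right_ne_zero_of_mul ha))
  have hAuBv : G.wcolOnInsert A u b a * G.wcolOnInsert B v b a ≠ 0 := (ne_zero_iff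
    (hcut.wcolOnInsert_add_eq_zero hodd hG (β := b) (δ := a) (x := u) (y := x)
      (by simpa [cutColouring, hxu, hxv, hx] using hab))).2
    (mul_ne_zero hAv hBu)
  exact mul_ne_zero (mul_ne_zero hAuBv hAv) hBu

end IsTwoCut

end EMG

theorem stmt8_general {V : Type} [Fintype V] [DecidableEq V] (G : EMG V)
    (u v : V) (huv : u ≠ v)
    (A B : Finset V)
    (hdisj : Disjoint A B)
    (huAB : u ∉ A ∧ u ∉ B) (hvAB : v ∉ A ∧ v ∉ B)
    (hcover : ∀ x : V, x ∈ A ∨ x ∈ B ∨ x = u ∨ x = v)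
    (hsep : ∀ e : G.E, ¬ (G.fst e ∈ A ∧ G.snd e ∈ B) ∧ ¬ (G.fst e ∈ B ∧ G.snd e ∈ A))
    (hodd : Odd A.card)
    (hGHZ : G.IsGHZ)
    (i₁ i₂ i₃ : ℕ) (h12 : i₁ ≠ i₂) (h13 : i₁ ≠ i₃) (h23 : i₂ ≠ i₃)
    (hf₁ : G.Feasible (fun _ => i₁)) (hf₂ : G.Feasible (fun _ => i₂))
    (hf₃ : G.Feasible (fun _ => i₃)) :
    ∃ a b : ℕ, a ≠ b ∧ a ∈ ({i₁, i₂, i₃} : Set ℕ) ∧ b ∈ ({i₁, i₂, i₃} : Set ℕ) ∧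
      G.wcolOn (insert u A) (fun x => if x = u then a else b) *
      G.wcolOn (insert v B) (fun x => if x = v then a else b) *
      G.wcolOn (insert v A) (fun x => if x = v then a else b) *
      G.wcolOn (insert u B) (fun x => if x = u then a else b) ≠ 0 := by
  have hcut : G.IsTwoCut u v A B := ⟨huv, hdisj, huAB, hvAB, hcover, hsep⟩
  have hcard : 2 < ({i₁, i₂, i₃} : Finset ℕ).card := by
    rw [Finset.card_eq_three.2 ⟨i₁, i₂, i₃, h12, h13, h23, rfl⟩]
    norm_num
  obtain ⟨a, ha, b, hb, hab, ⟨hua, hub⟩ | ⟨hva, hvb⟩⟩ :=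
    Finset.exists_ne_and_or_of_two_lt_card hcard
      (p := fun i => G.wcolOnInsert A u i i * G.wcolOnInsert B v i i ≠ 0)
      (q := fun i => G.wcolOnInsert A v i i * G.wcolOnInsert B u i i ≠ 0) fun i hi =>
      hcut.wcolOnInsert_ne_zero_or hodd hGHZ (by
        simp only [Finset.mem_insert, Finset.mem_singleton] at hi
        rcases hi with rfl | rfl | rfl <;> assumption)
  all_goals refine ⟨a, b, hab, by simpa using ha, by simpa using hb, ?_⟩
  · exact hcut.wcolOnInsert_prod_ne_zero hodd hGHZ hab hua hub
  · have h := hcut.symm.wcolOnInsert_prod_ne_zero hodd hGHZ hab hva hvb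
    show G.wcolOnInsert A u b a * G.wcolOnInsert B v b a * G.wcolOnInsert A v b a *
      G.wcolOnInsert B u b a ≠ 0
    exact fun h₀ => h (by linear_combination h₀)

/-- In a GHZ multigraph with a 2-cut `{u,v}` separating `A` (odd) from `B`,
if there are at least three feasible monochromatic colourings then two of
those colours, say `a` (playing `1`) and `b` (playing `2`), satisfy
`w(b_A a_u)·w(b_B a_v)·w(b_A a_v)·w(b_B a_u) ≠ 0`. -/
theorem stmt8 {V : Type} [Fintype V] [DecidableEq V] (G : EMG V)
    (u v : V) (huv : u ≠ v)
    (A B : Finset V)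
    (hAne : A.Nonempty) (hBne : B.Nonempty)
    (hdisj : Disjoint A B)
    (huAB : u ∉ A ∧ u ∉ B) (hvAB : v ∉ A ∧ v ∉ B)
    (hcover : ∀ x : V, x ∈ A ∨ x ∈ B ∨ x = u ∨ x = v)
    (hsep : ∀ e : G.E, ¬ (G.fst e ∈ A ∧ G.snd e ∈ B) ∧ ¬ (G.fst e ∈ B ∧ G.snd e ∈ A))
    (hodd : Odd A.card)
    (hGHZ : G.IsGHZ)
    (i₁ i₂ i₃ : ℕ) (h12 : i₁ ≠ i₂) (h13 : i₁ ≠ i₃) (h23 : i₂ ≠ i₃)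
    (hf₁ : G.Feasible (fun _ => i₁)) (hf₂ : G.Feasible (fun _ => i₂))
    (hf₃ : G.Feasible (fun _ => i₃)) :
    ∃ a b : ℕ, a ≠ b ∧ a ∈ ({i₁, i₂, i₃} : Set ℕ) ∧ b ∈ ({i₁, i₂, i₃} : Set ℕ) ∧
      G.wcolOn (insert u A) (fun x => if x = u then a else b) *
      G.wcolOn (insert v B) (fun x => if x = v then a else b) *
      G.wcolOn (insert v A) (fun x => if x = v then a else b) *
      G.wcolOn (insert u B) (fun x => if x = u then a else b) ≠ 0 :=
  stmt8_general G u v huv A B hdisj huAB hvAB hcover hsep hodd hGHZ i₁ i₂ i₃ h12 h13 h23 hf₁ hf₂ hf₃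
end
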